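/- arXiv:2504.17063 — 8 statements merged into one kernel-verified Lean document; each statement's English description precedes it below -/
import Mathlib

section
/- Fix matrices A ∈ ℝ^{ℓ×n} and B ∈ ℝ^{n×m}, and set N := 3n + m. Then the set D ⊆ ℝ^N × ℝ^N of all pairs of flows (v_Lf, F_Lf, v_R, v_ext) ∈ ℝ^n × ℝ^n × ℝ^n × ℝ^m and efforts (F_Le, v_Le, F_R, F_ext) ∈ ℝ^n × ℝ^n × ℝ^n × ℝ^m satisfying v_Lf = v_Le = v_R, A v_Le = 0, v_ext = Bᵀ v_Le, and ∃ μ ∈ ℝ^ℓ with F_Lf + F_Le + F_R + B F_ext + Aᵀ μ = 0, is a Dirac structure in ℝ^N × ℝ^N. -/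
open Matrix

/-- A subset `D ⊆ V × V` is a Dirac structure with respect to the bilinear pairing `pair`
(between flows and efforts) if membership in `D` is equivalent to being "orthogonal" to all
of `D` with respect to `(f,e),(f̂,ê) ↦ pair f̂ e + pair f ê`. -/
def IsDiracPair {V : Type*} (pair : V → V → ℝ) (D : Set (V × V)) : Prop :=
  ∀ p : V × V, p ∈ D ↔ ∀ q ∈ D, pair q.1 p.2 + pair p.1 q.2 = 0

/-- `ℝ^{3n+m}` split as `ℝ^n × ℝ^n × ℝ^n × ℝ^m`, the shape of both the flow vector
`(v_Lf, F_Lf, v_R, v_ext)` and the effort vector `(F_Le, v_Le, F_R, F_ext)`. -/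
abbrev Vnm (n m : ℕ) : Type :=
  (Fin n → ℝ) × (Fin n → ℝ) × (Fin n → ℝ) × (Fin m → ℝ)

/-- The componentwise Euclidean pairing on `ℝ^{3n+m} = ℝ^n × ℝ^n × ℝ^n × ℝ^m`. -/
def pairVnm {n m : ℕ} (f e : Vnm n m) : ℝ :=
  f.1 ⬝ᵥ e.1 + f.2.1 ⬝ᵥ e.2.1 + f.2.2.1 ⬝ᵥ e.2.2.1 + f.2.2.2 ⬝ᵥ e.2.2.2

/-! For elements of `D` the flow is kinematic, `(v, F, v, Bᵀ v)`, and the pairing of two of them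
collapses to `w ⬝ (net force of p) + v ⬝ (net force of q)`. Net forces lie in `range Aᵀ` and
velocities in `ker A`, so this vanishes. Conversely, testing `p` against the zero-velocity elements
of `D` (arbitrary efforts `F_Le, F_R, F_ext` and multiplier, balanced by `F_Lf`) shows that its flow
is kinematic with `A v = 0`; testing it against the force-free elements with velocity in `ker A`
shows that its net force is orthogonal to `ker A`, hence lies in `range Aᵀ`. -/

theorem Matrix.exists_transpose_mulVec_eq_of_forall_mulVec_eq_zero {K ι κ : Type*} [Field K]
    [Fintype ι] [Fintype κ] (A : Matrix κ ι K) {s : ι → K}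
    (h : ∀ w, A *ᵥ w = 0 → s ⬝ᵥ w = 0) : ∃ μ, Aᵀ *ᵥ μ = s := by
  classical
  have hs : dotProductEquiv K ι s ∈ (LinearMap.ker A.mulVecLin).dualAnnihilator :=
    (Submodule.mem_dualAnnihilator _).mpr h
  rw [← LinearMap.range_dualMap_eq_dualAnnihilator_ker] at hs
  obtain ⟨ψ, hψ⟩ := hs
  obtain ⟨μ, rfl⟩ := (dotProductEquiv K κ).surjective ψ
  refine ⟨μ, sub_eq_zero.mp (dotProduct_eq_zero _ fun w => ?_)⟩
  have hw : μ ⬝ᵥ A *ᵥ w = s ⬝ᵥ w := LinearMap.congr_fun hψ w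
  rw [sub_dotProduct, mulVec_transpose, ← dotProduct_mulVec, hw, sub_self]

section

variable {n m ℓ : ℕ} (A : Matrix (Fin ℓ) (Fin n) ℝ) (B : Matrix (Fin n) (Fin m) ℝ)

/-- `F_Lf + F_Le + F_R + B F_ext`, for `F = F_Lf` and `e = (F_Le, v_Le, F_R, F_ext)`. -/
def netForce (F : Fin n → ℝ) (e : Vnm n m) : Fin n → ℝ :=
  F + e.1 + e.2.2.1 + B *ᵥ e.2.2.2

def mechanicalDirac : Set (Vnm n m × Vnm n m) :=
  {p | p.1.1 = p.2.2.1 ∧ p.1.2.2.1 = p.2.2.1 ∧ A *ᵥ p.2.2.1 = 0 ∧ p.1.2.2.2 = Bᵀ *ᵥ p.2.2.1 ∧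
    ∃ μ, netForce B p.1.2.1 p.2 + Aᵀ *ᵥ μ = 0}

theorem mk_mem_mechanicalDirac {vLf F vR v FLe FR : Fin n → ℝ} {vext Fext : Fin m → ℝ} :
    ((vLf, F, vR, vext), (FLe, v, FR, Fext)) ∈ mechanicalDirac A B ↔
      vLf = v ∧ vR = v ∧ A *ᵥ v = 0 ∧ vext = Bᵀ *ᵥ v ∧
        ∃ μ, netForce B F (FLe, v, FR, Fext) + Aᵀ *ᵥ μ = 0 :=
  Iff.rfl

theorem pairVnm_add_pairVnm_of_kinematic (v w F G : Fin n → ℝ) (e e' : Vnm n m)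
    (he : e.2.1 = v) (he' : e'.2.1 = w) :
    pairVnm (w, G, w, Bᵀ *ᵥ w) e + pairVnm (v, F, v, Bᵀ *ᵥ v) e' =
      w ⬝ᵥ netForce B F e + v ⬝ᵥ netForce B G e' := by
  obtain ⟨FLe, _, FR, Fext⟩ := e
  obtain ⟨GLe, _, GR, Gext⟩ := e'
  subst he he'
  simp only [pairVnm, netForce, dotProduct_add, dotProduct_comm (Bᵀ *ᵥ _),
    dotProduct_transpose_mulVec, dotProduct_comm G, dotProduct_comm F]
  ring

theorem pairVnm_add_pairVnm_eq_zero {p q : Vnm n m × Vnm n m} (hp : p ∈ mechanicalDirac A B)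
    (hq : q ∈ mechanicalDirac A B) : pairVnm q.1 p.2 + pairVnm p.1 q.2 = 0 := by
  obtain ⟨⟨vLf, F, vR, vext⟩, FLe, v, FR, Fext⟩ := p
  obtain ⟨⟨wLf, G, wR, wext⟩, GLe, w, GR, Gext⟩ := q
  obtain ⟨hvLf, hvR, hAv, hvext, μ, hμ⟩ := (mk_mem_mechanicalDirac A B).mp hp
  obtain ⟨hwLf, hwR, hAw, hwext, ν, hν⟩ := (mk_mem_mechanicalDirac A B).mp hq
  subst vLf vR vext wLf wR wext
  rw [pairVnm_add_pairVnm_of_kinematic B v w F G (FLe, v, FR, Fext) (GLe, w, GR, Gext) rfl rfl,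
    eq_neg_of_add_eq_zero_left hμ, eq_neg_of_add_eq_zero_left hν]
  simp [dotProduct_transpose_mulVec, hAv, hAw]

def reaction (GLe GR : Fin n → ℝ) (Gext : Fin m → ℝ) (ν : Fin ℓ → ℝ) : Vnm n m × Vnm n m :=
  ((0, Aᵀ *ᵥ ν - (GLe + GR + B *ᵥ Gext), 0, 0), (GLe, 0, GR, Gext))

theorem reaction_mem_mechanicalDirac (GLe GR : Fin n → ℝ) (Gext : Fin m → ℝ) (ν : Fin ℓ → ℝ) :
    reaction A B GLe GR Gext ν ∈ mechanicalDirac A B := by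
  refine ⟨rfl, rfl, mulVec_zero A, (mulVec_zero Bᵀ).symm, -ν, ?_⟩
  simp only [reaction, netForce, mulVec_neg]
  abel

theorem pairVnm_reaction (p : Vnm n m × Vnm n m) (GLe GR : Fin n → ℝ) (Gext : Fin m → ℝ)
    (ν : Fin ℓ → ℝ) :
    pairVnm (reaction A B GLe GR Gext ν).1 p.2 + pairVnm p.1 (reaction A B GLe GR Gext ν).2 =
      (p.1.1 - p.2.2.1) ⬝ᵥ GLe + (p.1.2.2.1 - p.2.2.1) ⬝ᵥ GR +
        (p.1.2.2.2 - Bᵀ *ᵥ p.2.2.1) ⬝ᵥ Gext + A *ᵥ p.2.2.1 ⬝ᵥ ν := by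
  simp only [reaction, pairVnm, sub_dotProduct, dotProduct_sub, add_dotProduct, zero_dotProduct,
    dotProduct_zero, dotProduct_comm (Aᵀ *ᵥ ν), dotProduct_comm (B *ᵥ Gext),
    dotProduct_comm (Bᵀ *ᵥ _),
    dotProduct_transpose_mulVec, dotProduct_comm ν, dotProduct_comm _ GLe, dotProduct_comm _ GR]
  ring

theorem kinematic_of_forall_pairVnm_eq_zero {p : Vnm n m × Vnm n m}
    (h : ∀ q ∈ mechanicalDirac A B, pairVnm q.1 p.2 + pairVnm p.1 q.2 = 0) :
    p.1.1 = p.2.2.1 ∧ p.1.2.2.1 = p.2.2.1 ∧ A *ᵥ p.2.2.1 = 0 ∧ p.1.2.2.2 = Bᵀ *ᵥ p.2.2.1 := by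
  have key GLe GR Gext ν := (pairVnm_reaction A B p GLe GR Gext ν).symm.trans
    (h _ (reaction_mem_mechanicalDirac A B GLe GR Gext ν))
  refine ⟨sub_eq_zero.mp (dotProduct_eq_zero _ fun G => ?_),
    sub_eq_zero.mp (dotProduct_eq_zero _ fun G => ?_), dotProduct_eq_zero _ fun ν => ?_,
    sub_eq_zero.mp (dotProduct_eq_zero _ fun G => ?_)⟩
  · simpa using key G 0 0 0
  · simpa using key 0 G 0 0
  · simpa using key 0 0 0 ν
  · simpa using key 0 0 G 0

theorem exists_netForce_add_eq_zero {v F : Fin n → ℝ} {e : Vnm n m} (he : e.2.1 = v)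
    (h : ∀ q ∈ mechanicalDirac A B, pairVnm q.1 e + pairVnm (v, F, v, Bᵀ *ᵥ v) q.2 = 0) :
    ∃ μ, netForce B F e + Aᵀ *ᵥ μ = 0 := by
  obtain ⟨μ, hμ⟩ := exists_transpose_mulVec_eq_of_forall_mulVec_eq_zero A
    (s := netForce B F e) fun w hw => by
      have hq : ((w, 0, w, Bᵀ *ᵥ w), (0, w, 0, 0)) ∈ mechanicalDirac A B :=
        ⟨rfl, rfl, hw, rfl, 0, by simp [netForce]⟩
      have hpair := h _ hq
      rw [pairVnm_add_pairVnm_of_kinematic B v w F 0 e _ he rfl] at hpair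
      simpa [netForce, dotProduct_comm] using hpair
  exact ⟨-μ, by rw [mulVec_neg, hμ, add_neg_cancel]⟩

end

/-- The set of pairs of flows `(v_Lf, F_Lf, v_R, v_ext)` and efforts `(F_Le, v_Le, F_R, F_ext)`
with `v_Lf = v_Le = v_R`, `A v_Le = 0`, `v_ext = Bᵀ v_Le` and
`F_Lf + F_Le + F_R + B F_ext + Aᵀ μ = 0` for some `μ ∈ ℝ^ℓ` is a Dirac structure
in `ℝ^{3n+m} × ℝ^{3n+m}`. -/
theorem mechanical_isDirac {n m ℓ : ℕ}
    (A : Matrix (Fin ℓ) (Fin n) ℝ) (B : Matrix (Fin n) (Fin m) ℝ) :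
    IsDiracPair pairVnm
      {p : Vnm n m × Vnm n m |
        p.1.1 = p.2.2.1 ∧ p.1.2.2.1 = p.2.2.1 ∧
        A *ᵥ p.2.2.1 = 0 ∧
        p.1.2.2.2 = Bᵀ *ᵥ p.2.2.1 ∧
        ∃ μ : Fin ℓ → ℝ,
          p.1.2.1 + p.2.1 + p.2.2.2.1 + B *ᵥ p.2.2.2.2 + Aᵀ *ᵥ μ = 0} := by
  change IsDiracPair pairVnm (mechanicalDirac A B)
  refine fun p => ⟨fun hp q hq => pairVnm_add_pairVnm_eq_zero A B hp hq, fun h => ?_⟩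
  obtain ⟨⟨vLf, F, vR, vext⟩, e⟩ := p
  obtain ⟨hLf, hR, hAv, hext⟩ := kinematic_of_forall_pairVnm_eq_zero A B h
  dsimp only at h hLf hR hext
  subst hLf hR hext
  exact ⟨rfl, rfl, hAv, rfl, exists_netForce_add_eq_zero A B rfl h⟩
end

section
/- Let U_pos ⊆ ℝ^n be open, let A : U_pos → ℝ^{ℓ×n} and B : U_pos → ℝ^{n×m} be continuous, and assume A has constant rank on U_pos. For r ∈ U_pos and N := 3n + m, let D_r ⊆ ℝ^N × ℝ^N be the set of all pairs of flows (v_Lf, F_Lf, v_R, v_ext) and efforts (F_Le, v_Le, F_R, F_ext) with v_Lf = v_Le = v_R, A(r) v_Le = 0, v_ext = B(r)ᵀ v_Le, and ∃ μ ∈ ℝ^ℓ with F_Lf + F_Le + F_R + B(r) F_ext + A(r)ᵀ μ = 0. Then the family (D_r)_{r ∈ U_pos} is a modulated Dirac structure. -/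
open Matrix

/-- A family `(D x)_{x ∈ U}` of subsets of `V × V` is a modulated Dirac structure if each
`D x` is a Dirac structure and around each `x ∈ U` there is a neighborhood `Ux ⊆ U` on which
the family admits a continuous local trivialization by injective linear maps
`T y : W → V × V` (where `W ≅ ℝ^N`) with range `D y`. -/
def IsModulatedDirac (W : Type*) [AddCommGroup W] [Module ℝ W]
    {X V : Type*} [TopologicalSpace X] [TopologicalSpace V] [AddCommGroup V] [Module ℝ V]
    (pair : V → V → ℝ) (U : Set X) (D : X → Set (V × V)) : Prop :=
  (∀ x ∈ U, IsDiracPair pair (D x)) ∧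
  ∀ x ∈ U, ∃ Ux : Set X, IsOpen Ux ∧ x ∈ Ux ∧ Ux ⊆ U ∧
    ∃ T : X → (W →ₗ[ℝ] V × V),
      (∀ y ∈ Ux, Function.Injective (T y) ∧ Set.range (T y) = D y) ∧
      ∀ z : W, ContinuousOn (fun y => T y z) Ux

/-!
The set is the constrained graph `{(f, e) | e ∈ E, f - J e ∈ F}` of the skew-symmetric map
`J (F_Le, v_Le, F_R, F_ext) = (v_Le, -(F_Le + F_R + B F_ext), v_Le, Bᵀ v_Le)`, where `E` consists
of the efforts with `A v_Le = 0` and `F = 0 × range Aᵀ × 0 × 0` is its annihilator; such a graph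
is a Dirac structure because `J` is skew and `E` and `F` annihilate each other exactly.

The graph is the image of `(x, y) ↦ (J (κ x) + φ y, κ x)` for frames `κ` of `E` and `φ` of `F`,
so a local trivialization only needs continuous frames of `ker A(r)` and `range A(r)ᵀ` near
each `r₀`. This is where constant rank enters: if `L A(r₀) R = 1`, then near `r₀` the rows of
`L A(r)` stay independent and hence span the row space of `A(r)`, so `(L A(r))ᵀ` frames
`range A(r)ᵀ`; and projecting a frame of `ker A(r₀)` onto `ker (L A(r)) = ker A(r)` along
`range R` gives a frame of `ker A(r)`.
-/

open Module

namespace Matrix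

variable {K : Type*} [Field K]

section IndexTypes

variable {l m n : Type*}

theorem finrank_ker_mulVecLin [Fintype n] (M : Matrix m n K) :
    finrank K (LinearMap.ker M.mulVecLin) = Fintype.card n - M.rank := by
  have := LinearMap.finrank_range_add_finrank_ker M.mulVecLin
  rw [finrank_fintype_fun_eq_card] at this
  rw [rank]
  omega

theorem rank_eq_card_of_injective [Fintype n] {M : Matrix m n K}
    (hM : Function.Injective M.mulVecLin) : M.rank = Fintype.card n := by
  rw [rank, LinearMap.finrank_range_of_inj hM, finrank_fintype_fun_eq_card]

theorem range_mulVecLin_mul_eq_of_rank_eq [Fintype m] [Fintype n] {M : Matrix l m K}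
    {N : Matrix m n K} (h : (M * N).rank = M.rank) :
    LinearMap.range (M * N).mulVecLin = LinearMap.range M.mulVecLin :=
  Submodule.eq_of_le_of_finrank_eq
    (by rw [mulVecLin_mul]; exact LinearMap.range_comp_le_range _ _) h

theorem ker_mulVecLin_mul_eq_of_rank_eq [Fintype m] [Fintype n] {L : Matrix l m K}
    {M : Matrix m n K} (h : (L * M).rank = M.rank) :
    LinearMap.ker (L * M).mulVecLin = LinearMap.ker M.mulVecLin :=
  (Submodule.eq_of_le_of_finrank_eq
    (by rw [mulVecLin_mul]; exact LinearMap.ker_le_ker_comp _ _)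
    (by rw [finrank_ker_mulVecLin, finrank_ker_mulVecLin, h])).symm

theorem mem_range_transpose_mulVecLin_iff [Fintype m] [Fintype n] [DecidableEq m] [DecidableEq n]
    (A : Matrix m n K) (w : n → K) :
    w ∈ LinearMap.range Aᵀ.mulVecLin ↔ ∀ v ∈ LinearMap.ker A.mulVecLin, w ⬝ᵥ v = 0 := by
  constructor
  · rintro ⟨μ, rfl⟩ v hv
    rw [mulVecLin_apply, mulVec_transpose, ← dotProduct_mulVec]
    simp_all
  · intro hw
    obtain ⟨φ, hφ⟩ : dotProductEquiv K n w ∈ LinearMap.range A.mulVecLin.dualMap := by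
      rw [LinearMap.range_dualMap_eq_dualAnnihilator_ker, Submodule.mem_dualAnnihilator]
      exact hw
    refine ⟨(dotProductEquiv K m).symm φ, dotProduct_eq _ _ fun v => ?_⟩
    calc (Aᵀ *ᵥ (dotProductEquiv K m).symm φ) ⬝ᵥ v
        = (dotProductEquiv K m).symm φ ⬝ᵥ (A *ᵥ v) := by
          rw [mulVec_transpose, dotProduct_mulVec]
      _ = φ (A *ᵥ v) := LinearMap.congr_fun ((dotProductEquiv K m).apply_symm_apply φ) _
      _ = w ⬝ᵥ v := LinearMap.congr_fun hφ v

theorem exists_injective_range_eq [Fintype n] {k : ℕ} (S : Submodule K (n → K))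
    (hS : finrank K S = k) :
    ∃ C : Matrix n (Fin k) K,
      Function.Injective C.mulVecLin ∧ LinearMap.range C.mulVecLin = S := by
  let e : (Fin k → K) ≃ₗ[K] S := LinearEquiv.ofFinrankEq _ _ (by simp [hS])
  refine ⟨LinearMap.toMatrix' (S.subtype ∘ₗ e.toLinearMap), ?_, ?_⟩
  all_goals rw [← toLin'_apply', toLin'_toMatrix']
  · exact Subtype.val_injective.comp e.injective
  · rw [LinearMap.range_comp_of_range_eq_top _ e.range, Submodule.range_subtype]

theorem exists_mul_mul_eq_one [Fintype m] [Fintype n] [DecidableEq m] [DecidableEq n] {ρ : ℕ}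
    (M : Matrix m n K) (hM : M.rank = ρ) :
    ∃ (L : Matrix (Fin ρ) m K) (R : Matrix n (Fin ρ) K), L * M * R = 1 := by
  set S := LinearMap.range M.mulVecLin
  let e : (Fin ρ → K) ≃ₗ[K] S := LinearEquiv.ofFinrankEq _ _ (by simp [← hM, rank, S])
  obtain ⟨s, hs⟩ := M.mulVecLin.rangeRestrict.exists_rightInverse_of_surjective
    (LinearMap.range_rangeRestrict _)
  obtain ⟨t, ht⟩ := S.subtype.exists_leftInverse_of_injective S.ker_subtype
  have hMs (y : S) : M *ᵥ s y = y := congrArg Subtype.val (LinearMap.congr_fun hs y)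
  have hts (y : S) : t y = y := LinearMap.congr_fun ht y
  refine ⟨LinearMap.toMatrix' (e.symm.toLinearMap ∘ₗ t), LinearMap.toMatrix' (s ∘ₗ e.toLinearMap),
    toLin'.injective ?_⟩
  rw [toLin'_mul, toLin'_mul, toLin'_toMatrix', toLin'_toMatrix', toLin'_apply', toLin'_one]
  refine LinearMap.ext fun x => ?_
  simp [hMs, hts]

end IndexTypes

section RankConstraint

variable {ℓ n ρ : ℕ} {A : Matrix (Fin ℓ) (Fin n) K} {L : Matrix (Fin ρ) (Fin ℓ) K}

theorem rank_mul_eq_of_injective_transpose (hA : A.rank = ρ)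
    (hLA : Function.Injective (L * A)ᵀ.mulVecLin) : (L * A).rank = A.rank := by
  rw [← rank_transpose, rank_eq_card_of_injective hLA, hA, Fintype.card_fin]

theorem range_transpose_mul_eq (hA : A.rank = ρ) (hLA : Function.Injective (L * A)ᵀ.mulVecLin) :
    LinearMap.range (L * A)ᵀ.mulVecLin = LinearMap.range Aᵀ.mulVecLin := by
  rw [transpose_mul]
  refine range_mulVecLin_mul_eq_of_rank_eq ?_
  rw [← transpose_mul, rank_transpose, rank_transpose, rank_mul_eq_of_injective_transpose hA hLA]

theorem range_eq_ker_of_mul_eq_zero {C : Matrix (Fin n) (Fin (n - ρ)) K} (hA : A.rank = ρ)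
    (hLA : Function.Injective (L * A)ᵀ.mulVecLin) (hC : Function.Injective C.mulVecLin)
    (hLAC : L * A * C = 0) :
    LinearMap.range C.mulVecLin = LinearMap.ker A.mulVecLin := by
  refine Submodule.eq_of_le_of_finrank_eq ?_ ?_
  · rw [← ker_mulVecLin_mul_eq_of_rank_eq (rank_mul_eq_of_injective_transpose hA hLA),
      LinearMap.range_le_ker_iff, ← mulVecLin_mul, hLAC, mulVecLin_zero]
  · rw [LinearMap.finrank_range_of_inj hC, finrank_ker_mulVecLin, hA]
    simp

end RankConstraint

section ScaledKerProjection

variable {α m n : Type*} [CommRing α] [Fintype m] [Fintype n] [DecidableEq m] [DecidableEq n]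

/-- `det (X Y) • (1 - Y (X Y)⁻¹ X)`: a multiple of the projection onto `ker X` along `range Y`,
written with the adjugate so that it is polynomial, hence continuous, in `X`. -/
def scaledKerProjection (X : Matrix m n α) (Y : Matrix n m α) : Matrix n n α :=
  (X * Y).det • 1 - Y * (X * Y).adjugate * X

theorem mul_scaledKerProjection (X : Matrix m n α) (Y : Matrix n m α) :
    X * scaledKerProjection X Y = 0 := by
  rw [scaledKerProjection, Matrix.mul_sub, Matrix.mul_smul, Matrix.mul_one, ← Matrix.mul_assoc,
    ← Matrix.mul_assoc, mul_adjugate, Matrix.smul_mul, Matrix.one_mul, sub_self]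

theorem scaledKerProjection_of_mul_eq_one {X : Matrix m n α} {Y : Matrix n m α}
    (h : X * Y = 1) : scaledKerProjection X Y = 1 - Y * X := by
  simp [scaledKerProjection, h]

end ScaledKerProjection

end Matrix

theorem isOpen_setOf_injective_mulVec {𝕜 : Type*} [NontriviallyNormedField 𝕜] [CompleteSpace 𝕜]
    {m n : Type*} [Fintype m] [Fintype n] :
    IsOpen {M : Matrix m n 𝕜 | Function.Injective M.mulVec} := by
  simp_rw [mulVec_injective_iff]
  have h := isOpen_setOfPred_linearIndependent (𝕜 := 𝕜) (E := m → 𝕜) (ι := n)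
  exact h.preimage (continuous_id.matrix_transpose)

section LocalFrames

open Function LinearMap

variable {X : Type*} [TopologicalSpace X] {U : Set X} {ℓ n ρ : ℕ}
  {A : X → Matrix (Fin ℓ) (Fin n) ℝ}

theorem exists_local_frames_of_rank_eq (hU : IsOpen U) (hA : ContinuousOn A U)
    (hρ : ∀ r ∈ U, (A r).rank = ρ) {r₀ : X} (hr₀ : r₀ ∈ U) :
    ∃ V, IsOpen V ∧ r₀ ∈ V ∧ V ⊆ U ∧
      ∃ (C : X → Matrix (Fin n) (Fin (n - ρ)) ℝ) (Q : X → Matrix (Fin n) (Fin ρ) ℝ),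
        ContinuousOn C V ∧ ContinuousOn Q V ∧ ∀ r ∈ V,
          (Injective (C r).mulVecLin ∧ range (C r).mulVecLin = ker (A r).mulVecLin) ∧
          (Injective (Q r).mulVecLin ∧ range (Q r).mulVecLin = range (A r)ᵀ.mulVecLin) := by
  obtain ⟨L, R, hLR⟩ := (A r₀).exists_mul_mul_eq_one (hρ r₀ hr₀)
  obtain ⟨C₀, hC₀, hC₀r⟩ := Matrix.exists_injective_range_eq (ker (A r₀).mulVecLin)
    (by rw [Matrix.finrank_ker_mulVecLin, hρ r₀ hr₀, Fintype.card_fin])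
  have hAC₀ : A r₀ * C₀ = 0 := by
    apply Matrix.toLin'.injective
    rw [Matrix.toLin'_mul, Matrix.toLin'_apply', Matrix.toLin'_apply', map_zero]
    exact range_le_ker_iff.mp hC₀r.le
  set Q := fun r => (L * A r)ᵀ
  set C := fun r => (L * A r).scaledKerProjection R * C₀
  have hQ : ContinuousOn Q U := by fun_prop
  have hC : ContinuousOn C U := by simp only [C, Matrix.scaledKerProjection]; fun_prop
  have hQr₀ : Injective (Q r₀).mulVec := by
    refine LeftInverse.injective (g := Rᵀ.mulVec) fun x => ?_
    rw [Matrix.mulVec_mulVec, ← Matrix.transpose_mul, hLR, Matrix.transpose_one,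
      Matrix.one_mulVec]
  have hCr₀ : C r₀ = C₀ := by
    simp [C, Matrix.scaledKerProjection_of_mul_eq_one hLR, Matrix.sub_mul, Matrix.mul_assoc, hAC₀]
  refine ⟨(U ∩ Q ⁻¹' {M | Injective M.mulVec}) ∩ C ⁻¹' {M | Injective M.mulVec},
    (hC.mono Set.inter_subset_left).isOpen_inter_preimage
      (hQ.isOpen_inter_preimage hU isOpen_setOf_injective_mulVec) isOpen_setOf_injective_mulVec,
    ⟨⟨hr₀, hQr₀⟩, by rw [Set.mem_preimage, hCr₀]; exact hC₀⟩, fun r hr => hr.1.1, C, Q,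
    hC.mono fun r hr => hr.1.1, hQ.mono fun r hr => hr.1.1, fun r ⟨⟨hrU, hQr⟩, hCr⟩ => ?_⟩
  have hLAC : L * A r * C r = 0 := by
    rw [← Matrix.mul_assoc, Matrix.mul_scaledKerProjection, Matrix.zero_mul]
  exact ⟨⟨hCr, Matrix.range_eq_ker_of_mul_eq_zero (hρ r hrU) hQr hCr hLAC⟩,
    hQr, Matrix.range_transpose_mul_eq (hρ r hrU) hQr⟩

end LocalFrames

section ConstrainedGraph

variable {R V W₁ W₂ : Type*} [Ring R] [AddCommGroup V] [Module R V] [AddCommGroup W₁]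
  [Module R W₁] [AddCommGroup W₂] [Module R W₂]

def constrainedGraph (J : V →ₗ[R] V) (E F : Submodule R V) : Set (V × V) :=
  {p | p.2 ∈ E ∧ p.1 - J p.2 ∈ F}

def constrainedGraphParam (J : V →ₗ[R] V) (κ : W₁ →ₗ[R] V) (φ : W₂ →ₗ[R] V) :
    W₁ × W₂ →ₗ[R] V × V :=
  ((J ∘ₗ κ).coprod φ).prod (κ ∘ₗ LinearMap.fst R W₁ W₂)

variable {J : V →ₗ[R] V} {κ : W₁ →ₗ[R] V} {φ : W₂ →ₗ[R] V}

@[simp]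
theorem constrainedGraphParam_apply (x : W₁ × W₂) :
    constrainedGraphParam J κ φ x = (J (κ x.1) + φ x.2, κ x.1) := rfl

theorem injective_constrainedGraphParam (hκ : Function.Injective κ)
    (hφ : Function.Injective φ) : Function.Injective (constrainedGraphParam J κ φ) := by
  rintro ⟨x, y⟩ ⟨x', y'⟩ h
  simp only [constrainedGraphParam_apply, Prod.mk.injEq] at h
  obtain rfl : x = x' := hκ h.2
  exact Prod.ext rfl (hφ (add_left_cancel h.1))

theorem range_constrainedGraphParam :
    Set.range (constrainedGraphParam J κ φ) =
      constrainedGraph J (LinearMap.range κ) (LinearMap.range φ) := by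
  ext ⟨f, e⟩
  constructor
  · rintro ⟨⟨x, y⟩, h⟩
    simp only [constrainedGraphParam_apply, Prod.mk.injEq] at h
    obtain ⟨rfl, rfl⟩ := h
    exact ⟨⟨x, rfl⟩, y, by simp⟩
  · rintro ⟨⟨x, rfl⟩, y, hy⟩
    exact ⟨(x, y), by simp [hy]⟩

end ConstrainedGraph

theorem isDiracPair_constrainedGraph {V : Type*} [AddCommGroup V] [Module ℝ V]
    (β : V →ₗ[ℝ] V →ₗ[ℝ] ℝ) (J : V →ₗ[ℝ] V) (E F : Submodule ℝ V)
    (hJ : ∀ e ∈ E, ∀ e' ∈ E, β (J e) e' + β (J e') e = 0)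
    (hFE : ∀ f ∈ F, ∀ e ∈ E, β f e = 0)
    (hE : ∀ e, (∀ f ∈ F, β f e = 0) → e ∈ E)
    (hF : ∀ f, (∀ e ∈ E, β f e = 0) → f ∈ F) :
    IsDiracPair (fun f e => β f e) (constrainedGraph J E F) := by
  rintro ⟨f, e⟩
  constructor
  · rintro ⟨he, hf⟩ ⟨f', e'⟩ ⟨he', hf'⟩
    have h₁ := hFE _ hf' e he
    have h₂ := hFE _ hf e' he'
    simp only [map_sub, LinearMap.sub_apply] at h₁ h₂ ⊢
    linarith [hJ e he e' he']
  · intro h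
    have he : e ∈ E := hE e fun f' hf' => by
      simpa using h (f', 0) ⟨E.zero_mem, by simpa using hf'⟩
    refine ⟨he, hF _ fun e' he' => ?_⟩
    have := h (J e', e') ⟨he', by simp⟩
    simp only [map_sub, LinearMap.sub_apply] at this ⊢
    linarith [hJ e he e' he']

section Mechanical

open Function LinearMap

variable {n m k ρ ℓ : ℕ}

def pairVnmBilin : Vnm n m →ₗ[ℝ] Vnm n m →ₗ[ℝ] ℝ :=
  LinearMap.mk₂ ℝ pairVnm
    (fun _ _ _ => by simp only [pairVnm, Prod.fst_add, Prod.snd_add, add_dotProduct]; ring)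
    (fun _ _ _ => by
      simp only [pairVnm, Prod.smul_fst, Prod.smul_snd, smul_dotProduct, smul_eq_mul]; ring)
    (fun _ _ _ => by simp only [pairVnm, Prod.fst_add, Prod.snd_add, dotProduct_add]; ring)
    (fun _ _ _ => by
      simp only [pairVnm, Prod.smul_fst, Prod.smul_snd, dotProduct_smul, smul_eq_mul]; ring)

def mechanicalJ (B : Matrix (Fin n) (Fin m) ℝ) : Vnm n m →ₗ[ℝ] Vnm n m where
  toFun e := (e.2.1, -(e.1 + e.2.2.1 + B *ᵥ e.2.2.2), e.2.1, Bᵀ *ᵥ e.2.1)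
  map_add' _ _ := by simp only [Prod.fst_add, Prod.snd_add, mulVec_add, Prod.mk_add_mk]; abel_nf
  map_smul' _ _ := by
    simp only [Prod.smul_fst, Prod.smul_snd, mulVec_smul, Prod.smul_mk, RingHom.id_apply, smul_add,
      smul_neg]

def effortConstraint (A : Matrix (Fin ℓ) (Fin n) ℝ) : Submodule ℝ (Vnm n m) :=
  (⊤ : Submodule ℝ (Fin n → ℝ)).prod ((LinearMap.ker A.mulVecLin).prod ⊤)

def constraintForces (A : Matrix (Fin ℓ) (Fin n) ℝ) : Submodule ℝ (Vnm n m) :=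
  (⊥ : Submodule ℝ (Fin n → ℝ)).prod ((LinearMap.range Aᵀ.mulVecLin).prod ⊥)

theorem setOf_mechanical_eq_constrainedGraph (A : Matrix (Fin ℓ) (Fin n) ℝ)
    (B : Matrix (Fin n) (Fin m) ℝ) :
    {p : Vnm n m × Vnm n m |
        p.1.1 = p.2.2.1 ∧ p.1.2.2.1 = p.2.2.1 ∧
        A *ᵥ p.2.2.1 = 0 ∧
        p.1.2.2.2 = Bᵀ *ᵥ p.2.2.1 ∧
        ∃ μ : Fin ℓ → ℝ,
          p.1.2.1 + p.2.1 + p.2.2.2.1 + B *ᵥ p.2.2.2.2 + Aᵀ *ᵥ μ = 0} =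
      constrainedGraph (mechanicalJ B) (effortConstraint A) (constraintForces A) := by
  ext ⟨⟨a, b, c, d⟩, e₁, e₂, e₃, e₄⟩
  have hforce : (∃ μ, b + e₁ + e₃ + B *ᵥ e₄ + Aᵀ *ᵥ μ = 0) ↔
      b - -(e₁ + e₃ + B *ᵥ e₄) ∈ LinearMap.range Aᵀ.mulVecLin := by
    have key (μ : Fin ℓ → ℝ) : Aᵀ *ᵥ -μ - (b - -(e₁ + e₃ + B *ᵥ e₄)) =
        -(b + e₁ + e₃ + B *ᵥ e₄ + Aᵀ *ᵥ μ) := by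
      rw [mulVec_neg]; abel
    refine ⟨fun ⟨μ, h⟩ => ⟨-μ, sub_eq_zero.mp (by rw [mulVecLin_apply, key, h, neg_zero])⟩,
      fun ⟨y, h⟩ => ⟨-y, ?_⟩⟩
    rw [← neg_eq_zero, ← key, neg_neg, ← mulVecLin_apply, h, sub_self]
  simp only [constrainedGraph, Set.mem_ofPred_eq, effortConstraint, constraintForces,
    Submodule.mem_prod, Submodule.mem_top, Submodule.mem_bot, LinearMap.mem_ker, mulVecLin_apply,
    mechanicalJ, LinearMap.coe_mk, AddHom.coe_mk, Prod.fst_sub, Prod.snd_sub, sub_eq_zero,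
    Prod.mk.injEq, true_and, and_true, hforce]
  tauto

theorem pairVnm_mechanicalJ_add_swap (B : Matrix (Fin n) (Fin m) ℝ) (e e' : Vnm n m) :
    pairVnm (mechanicalJ B e) e' + pairVnm (mechanicalJ B e') e = 0 := by
  obtain ⟨a, b, c, d⟩ := e
  obtain ⟨a', b', c', d'⟩ := e'
  have hB (x : Fin m → ℝ) (y : Fin n → ℝ) : (B *ᵥ x) ⬝ᵥ y = (Bᵀ *ᵥ y) ⬝ᵥ x := by
    rw [mulVec_transpose, ← dotProduct_mulVec, dotProduct_comm]
  simp only [pairVnm, mechanicalJ, LinearMap.coe_mk, AddHom.coe_mk, neg_dotProduct,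
    add_dotProduct, hB]
  rw [dotProduct_comm b a', dotProduct_comm b c', dotProduct_comm b' a, dotProduct_comm b' c]
  ring

theorem pairVnm_eq_zero_of_mem_constraintForces {A : Matrix (Fin ℓ) (Fin n) ℝ} {f e : Vnm n m}
    (hf : f ∈ constraintForces A) (he : e ∈ effortConstraint A) : pairVnm f e = 0 := by
  obtain ⟨f₁, f₂, f₃, f₄⟩ := f
  simp only [constraintForces, Submodule.mem_prod, Submodule.mem_bot, Prod.mk_eq_zero] at hf
  obtain ⟨rfl, hf₂, rfl, rfl⟩ := hf
  simp [pairVnm, (mem_range_transpose_mulVecLin_iff A f₂).mp hf₂ _ he.2.1]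

theorem mem_effortConstraint_of_forall {A : Matrix (Fin ℓ) (Fin n) ℝ} {e : Vnm n m}
    (h : ∀ f ∈ constraintForces A, pairVnm f e = 0) : e ∈ effortConstraint A := by
  have := h (0, Aᵀ *ᵥ (A *ᵥ e.2.1), 0, 0) ⟨rfl, ⟨_, rfl⟩, rfl⟩
  simp only [pairVnm, zero_dotProduct, zero_add, add_zero] at this
  rw [mulVec_transpose, ← dotProduct_mulVec, dotProduct_self_eq_zero] at this
  exact ⟨trivial, this, trivial⟩

theorem mem_constraintForces_of_forall {A : Matrix (Fin ℓ) (Fin n) ℝ} {f : Vnm n m}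
    (h : ∀ e ∈ effortConstraint A, pairVnm f e = 0) : f ∈ constraintForces A := by
  obtain ⟨f₁, f₂, f₃, f₄⟩ := f
  have h₁ := h (f₁, 0, 0, 0) ⟨trivial, zero_mem _, trivial⟩
  have h₃ := h (0, 0, f₃, 0) ⟨trivial, zero_mem _, trivial⟩
  have h₄ := h (0, 0, 0, f₄) ⟨trivial, zero_mem _, trivial⟩
  simp only [pairVnm, dotProduct_zero, add_zero, zero_add, dotProduct_self_eq_zero] at h₁ h₃ h₄
  refine ⟨h₁, (mem_range_transpose_mulVecLin_iff A f₂).mpr fun v hv => ?_, by simp [h₃, h₄]⟩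
  simpa [pairVnm] using h (0, v, 0, 0) ⟨trivial, hv, trivial⟩

theorem isDiracPair_mechanical (A : Matrix (Fin ℓ) (Fin n) ℝ) (B : Matrix (Fin n) (Fin m) ℝ) :
    IsDiracPair pairVnm
      (constrainedGraph (mechanicalJ B) (effortConstraint A) (constraintForces A)) :=
  isDiracPair_constrainedGraph pairVnmBilin _ _ _
    (fun e _ e' _ => pairVnm_mechanicalJ_add_swap B e e')
    (fun _ hf _ he => pairVnm_eq_zero_of_mem_constraintForces hf he)
    (fun _ h => mem_effortConstraint_of_forall h)
    (fun _ h => mem_constraintForces_of_forall h)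

def effortFrame (C : Matrix (Fin n) (Fin k) ℝ) :
    ((Fin n → ℝ) × (Fin k → ℝ) × (Fin n → ℝ) × (Fin m → ℝ)) →ₗ[ℝ] Vnm n m :=
  LinearMap.id.prodMap (C.mulVecLin.prodMap LinearMap.id)

def forceFrame (Q : Matrix (Fin n) (Fin ρ) ℝ) : (Fin ρ → ℝ) →ₗ[ℝ] Vnm n m :=
  inr ℝ _ _ ∘ₗ inl ℝ _ _ ∘ₗ Q.mulVecLin

theorem injective_effortFrame {C : Matrix (Fin n) (Fin k) ℝ} (hC : Injective C.mulVecLin) :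
    Injective (effortFrame (m := m) C) :=
  injective_id.prodMap (hC.prodMap injective_id)

theorem range_effortFrame {A : Matrix (Fin ℓ) (Fin n) ℝ} {C : Matrix (Fin n) (Fin k) ℝ}
    (hC : range C.mulVecLin = ker A.mulVecLin) :
    range (effortFrame (m := m) C) = effortConstraint A := by
  rw [effortFrame, range_prodMap, range_prodMap, hC, range_id, range_id]
  rfl

theorem injective_forceFrame {Q : Matrix (Fin n) (Fin ρ) ℝ} (hQ : Injective Q.mulVecLin) :
    Injective (forceFrame (m := m) Q) :=
  inr_injective.comp (inl_injective.comp hQ)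

theorem range_forceFrame {A : Matrix (Fin ℓ) (Fin n) ℝ} {Q : Matrix (Fin n) (Fin ρ) ℝ}
    (hQ : range Q.mulVecLin = range Aᵀ.mulVecLin) :
    range (forceFrame (m := m) Q) = constraintForces A := by
  rw [forceFrame, range_comp, range_comp, hQ, Submodule.map_inl, Submodule.map_inr]
  rfl

theorem continuousOn_constrainedGraphParam_mechanical {X : Type*} [TopologicalSpace X] {V : Set X}
    {C : X → Matrix (Fin n) (Fin k) ℝ} {Q : X → Matrix (Fin n) (Fin ρ) ℝ}
    {B : X → Matrix (Fin n) (Fin m) ℝ} (hC : ContinuousOn C V) (hQ : ContinuousOn Q V)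
    (hB : ContinuousOn B V)
    (z : ((Fin n → ℝ) × (Fin k → ℝ) × (Fin n → ℝ) × (Fin m → ℝ)) × (Fin ρ → ℝ)) :
    ContinuousOn (fun r => constrainedGraphParam (mechanicalJ (B r)) (effortFrame (C r))
      (forceFrame (Q r)) z) V := by
  simp only [constrainedGraphParam_apply, effortFrame, forceFrame, mechanicalJ, coe_mk,
    AddHom.coe_mk, prodMap_apply, id_apply, LinearMap.comp_apply, mulVecLin_apply, inl_apply,
    inr_apply]
  fun_prop

end Mechanical

/-- For continuous `A : U_pos → ℝ^{ℓ×n}` of constant rank and continuous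
`B : U_pos → ℝ^{n×m}`, the family of sets of pairs of flows `(v_Lf, F_Lf, v_R, v_ext)` and
efforts `(F_Le, v_Le, F_R, F_ext)` with `v_Lf = v_Le = v_R`, `A(r) v_Le = 0`,
`v_ext = B(r)ᵀ v_Le` and `F_Lf + F_Le + F_R + B(r) F_ext + A(r)ᵀ μ = 0` for some `μ`,
is a modulated Dirac structure. -/
theorem mechanical_isModulatedDirac {n m ℓ : ℕ}
    (Upos : Set (Fin n → ℝ)) (hUpos : IsOpen Upos)
    (A : (Fin n → ℝ) → Matrix (Fin ℓ) (Fin n) ℝ)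
    (B : (Fin n → ℝ) → Matrix (Fin n) (Fin m) ℝ)
    (hA : ContinuousOn A Upos) (hB : ContinuousOn B Upos)
    (hrank : ∃ ρ : ℕ, ∀ r ∈ Upos, (A r).rank = ρ) :
    IsModulatedDirac (Fin (3 * n + m) → ℝ) pairVnm Upos
      (fun r => {p : Vnm n m × Vnm n m |
        p.1.1 = p.2.2.1 ∧ p.1.2.2.1 = p.2.2.1 ∧
        A r *ᵥ p.2.2.1 = 0 ∧
        p.1.2.2.2 = (B r)ᵀ *ᵥ p.2.2.1 ∧
        ∃ μ : Fin ℓ → ℝ,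
          p.1.2.1 + p.2.1 + p.2.2.2.1 + B r *ᵥ p.2.2.2.2 + (A r)ᵀ *ᵥ μ = 0}) := by
  obtain ⟨ρ, hρ⟩ := hrank
  simp only [setOf_mechanical_eq_constrainedGraph]
  refine ⟨fun r _ => isDiracPair_mechanical (A r) (B r), fun r₀ hr₀ => ?_⟩
  obtain ⟨V, hV, hr₀V, hVU, C, Q, hC, hQ, hframes⟩ :=
    exists_local_frames_of_rank_eq hUpos hA hρ hr₀
  have hρn : ρ ≤ n := hρ r₀ hr₀ ▸ (A r₀).rank_le_width
  let e : (Fin (3 * n + m) → ℝ) ≃ₗ[ℝ]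
      ((Fin n → ℝ) × (Fin (n - ρ) → ℝ) × (Fin n → ℝ) × (Fin m → ℝ)) × (Fin ρ → ℝ) :=
    LinearEquiv.ofFinrankEq _ _ (by simp; omega)
  refine ⟨V, hV, hr₀V, hVU, fun r => constrainedGraphParam (mechanicalJ (B r))
    (effortFrame (C r)) (forceFrame (Q r)) ∘ₗ e.toLinearMap, fun r hr => ?_,
    fun z => continuousOn_constrainedGraphParam_mechanical hC hQ (hB.mono hVU) (e z)⟩
  obtain ⟨⟨hCi, hCr⟩, hQi, hQr⟩ := hframes r hr
  refine ⟨(injective_constrainedGraphParam (injective_effortFrame hCi)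
    (injective_forceFrame hQi)).comp e.injective, ?_⟩
  dsimp only
  rw [LinearMap.coe_comp, Set.range_comp, LinearEquiv.coe_coe, e.surjective.range_eq,
    Set.image_univ, range_constrainedGraphParam, range_effortFrame hCr, range_forceFrame hQr]
end

section
/- Fix matrices Z ∈ ℝ^{p×q}, G ∈ ℝ^{q×q} with Gᵀ = −G, A ∈ ℝ^{ℓ×q} and B ∈ ℝ^{q×m}, and set N := p + 2q + m. Then the set D ⊆ ℝ^N × ℝ^N of all pairs of flows (ϖ_Lf, τ_Lf, ϖ_R, ϖ_ext) ∈ ℝ^p × ℝ^q × ℝ^q × ℝ^m and efforts (τ_Le, ϖ_Le, τ_R, τ_ext) ∈ ℝ^p × ℝ^q × ℝ^q × ℝ^m satisfying ϖ_Lf = Z ϖ_Le, ϖ_R = ϖ_Le, A ϖ_Le = 0, ϖ_ext = Bᵀ ϖ_Le, and ∃ μ ∈ ℝ^ℓ with τ_Lf + Zᵀ τ_Le + G ϖ_Le + τ_R + B τ_ext + Aᵀ μ = 0, is a Dirac structure in ℝ^N × ℝ^N. -/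
open Matrix

/-- `ℝ^{p+2q+m}` split as `ℝ^p × ℝ^q × ℝ^q × ℝ^m`, the shape of both the flow vector
`(ϖ_Lf, τ_Lf, ϖ_R, ϖ_ext)` and the effort vector `(τ_Le, ϖ_Le, τ_R, τ_ext)`. -/
abbrev Vpqm (p q m : ℕ) : Type :=
  (Fin p → ℝ) × (Fin q → ℝ) × (Fin q → ℝ) × (Fin m → ℝ)

def pairVpqm {p q m : ℕ} (f e : Vpqm p q m) : ℝ :=
  f.1 ⬝ᵥ e.1 + f.2.1 ⬝ᵥ e.2.1 + f.2.2.1 ⬝ᵥ e.2.2.1 + f.2.2.2 ⬝ᵥ e.2.2.2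

/-!
The relation has the constrained form `{(f, e) | e ∈ E, f - J e ∈ F}`, where
`J e = (Z ϖ_Le, -(Zᵀ τ_Le + G ϖ_Le + τ_R + B τ_ext), ϖ_Le, Bᵀ ϖ_Le)` is skew for the pairing
because `G` is, `E = {e | A ϖ_Le = 0}` and `F = {(0, Aᵀ μ, 0, 0)}`. Any such relation whose `E`
and `F` are each other's annihilators is Dirac: pairing two of its elements leaves only the skew
terms; conversely, testing against `(k, 0)` with `k ∈ F` forces `e ∈ E`, and then testing against
`(J e', e')` forces `f - J e ∈ F`. The only finite-dimensional input is that the annihilator of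
`ker A` is `range Aᵀ`.
-/

theorem isDiracPair_of_skew {V : Type*} [AddCommGroup V] [Module ℝ V]
    (b : LinearMap.BilinForm ℝ V) (J : V →ₗ[ℝ] V) (E F : Submodule ℝ V)
    (hJ : ∀ e ∈ E, ∀ e' ∈ E, b (J e) e' + b (J e') e = 0)
    (hE : b.orthogonal F = E) (hF : b.flip.orthogonal E = F) :
    IsDiracPair (fun f e => b f e) {x | x.2 ∈ E ∧ x.1 - J x.2 ∈ F} := by
  have hFE : ∀ k ∈ F, ∀ e ∈ E, b k e = 0 := fun k hk e he => by
    rw [← hF] at hk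
    exact hk e he
  rintro ⟨f, e⟩
  constructor
  · rintro ⟨he, hf⟩ ⟨f', e'⟩ ⟨he', hf'⟩
    have h₁ := hFE _ hf' e he
    have h₂ := hFE _ hf e' he'
    simp only [map_sub, LinearMap.sub_apply] at h₁ h₂ ⊢
    linear_combination h₁ + h₂ + hJ e' he' e he
  · intro H
    have he : e ∈ E := by
      rw [← hE]
      intro k hk
      simpa using H (k, 0) ⟨E.zero_mem, by simpa using hk⟩
    refine ⟨he, ?_⟩
    rw [← hF]
    intro e' he'
    have h := H (J e', e') ⟨he', by simp⟩
    simp only [LinearMap.BilinForm.flip_apply, map_sub] at h ⊢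
    linear_combination h - hJ e he e' he'

theorem Matrix.mulVec_dotProduct_comm {m n R : Type*} [Fintype m] [Fintype n] [CommSemiring R]
    (M : Matrix m n R) (u : n → R) (v : m → R) : (M *ᵥ u) ⬝ᵥ v = (Mᵀ *ᵥ v) ⬝ᵥ u := by
  rw [dotProduct_comm, ← dotProduct_transpose_mulVec, dotProduct_comm]

theorem Matrix.exists_transpose_mulVec_eq_of_orthogonal_ker {m n : Type*} [Fintype m]
    [Fintype n] [DecidableEq m] [DecidableEq n] (A : Matrix m n ℝ) (v : n → ℝ)
    (h : ∀ w, A *ᵥ w = 0 → w ⬝ᵥ v = 0) : ∃ μ, Aᵀ *ᵥ μ = v := by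
  have hv : WithLp.toLp 2 v ∈ (toEuclideanLin A).kerᗮ := by
    rw [Submodule.mem_orthogonal]
    intro w hw
    have hAw : A *ᵥ w.ofLp = 0 := by
      simpa using congrArg WithLp.ofLp hw
    simpa [EuclideanSpace.inner_eq_star_dotProduct, dotProduct_comm] using h w.ofLp hAw
  rw [LinearMap.orthogonal_ker, ← toEuclideanLin_conjTranspose_eq_adjoint] at hv
  obtain ⟨μ, hμ⟩ := hv
  exact ⟨μ.ofLp, by simpa using congrArg WithLp.ofLp hμ⟩

namespace Vpqm

variable {p q m ℓ : ℕ}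

def pairing : LinearMap.BilinForm ℝ (Vpqm p q m) :=
  LinearMap.mk₂ ℝ pairVpqm
    (fun _ _ _ => by simp only [pairVpqm, Prod.fst_add, Prod.snd_add, add_dotProduct]; ring)
    (fun _ _ _ => by simp only [pairVpqm, Prod.smul_fst, Prod.smul_snd, smul_dotProduct]; ring)
    (fun _ _ _ => by simp only [pairVpqm, Prod.fst_add, Prod.snd_add, dotProduct_add]; ring)
    (fun _ _ _ => by simp only [pairVpqm, Prod.smul_fst, Prod.smul_snd, dotProduct_smul]; ring)

theorem pairing_apply (f e : Vpqm p q m) : pairing f e = pairVpqm f e := rfl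

def structureMap (Z : Matrix (Fin p) (Fin q) ℝ) (G : Matrix (Fin q) (Fin q) ℝ)
    (B : Matrix (Fin q) (Fin m) ℝ) : Vpqm p q m →ₗ[ℝ] Vpqm p q m where
  toFun e := (Z *ᵥ e.2.1, -(Zᵀ *ᵥ e.1 + G *ᵥ e.2.1 + e.2.2.1 + B *ᵥ e.2.2.2), e.2.1, Bᵀ *ᵥ e.2.1)
  map_add' e e' := by
    simp only [Prod.fst_add, Prod.snd_add, mulVec_add, Prod.mk_add_mk, Prod.mk.injEq, true_and,
      and_true]
    abel
  map_smul' c e := by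
    simp only [Prod.smul_fst, Prod.smul_snd, mulVec_smul, smul_add, smul_neg, Prod.smul_mk,
      RingHom.id_apply]

theorem structureMap_apply (Z : Matrix (Fin p) (Fin q) ℝ) (G : Matrix (Fin q) (Fin q) ℝ)
    (B : Matrix (Fin q) (Fin m) ℝ) (e : Vpqm p q m) :
    structureMap Z G B e =
      (Z *ᵥ e.2.1, -(Zᵀ *ᵥ e.1 + G *ᵥ e.2.1 + e.2.2.1 + B *ᵥ e.2.2.2), e.2.1, Bᵀ *ᵥ e.2.1) :=
  rfl

def constrainedEfforts (A : Matrix (Fin ℓ) (Fin q) ℝ) : Submodule ℝ (Vpqm p q m) :=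
  LinearMap.ker (A.mulVecLin ∘ₗ LinearMap.fst ℝ _ _ ∘ₗ LinearMap.snd ℝ _ _)

def constraintFlows (A : Matrix (Fin ℓ) (Fin q) ℝ) : Submodule ℝ (Vpqm p q m) :=
  LinearMap.range (LinearMap.inr ℝ _ _ ∘ₗ LinearMap.inl ℝ _ _ ∘ₗ Aᵀ.mulVecLin)

theorem mem_constrainedEfforts {A : Matrix (Fin ℓ) (Fin q) ℝ} {e : Vpqm p q m} :
    e ∈ constrainedEfforts A ↔ A *ᵥ e.2.1 = 0 := Iff.rfl

theorem mem_constraintFlows {A : Matrix (Fin ℓ) (Fin q) ℝ} {k : Vpqm p q m} :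
    k ∈ constraintFlows A ↔ ∃ μ, k = (0, Aᵀ *ᵥ μ, 0, 0) :=
  exists_congr fun _ => eq_comm

theorem pairing_structureMap_antisymm (Z : Matrix (Fin p) (Fin q) ℝ) {G : Matrix (Fin q) (Fin q) ℝ}
    (hG : Gᵀ = -G) (B : Matrix (Fin q) (Fin m) ℝ) (e e' : Vpqm p q m) :
    pairing (structureMap Z G B e) e' + pairing (structureMap Z G B e') e = 0 := by
  obtain ⟨τ, ϖ, τR, τx⟩ := e
  obtain ⟨τ', ϖ', τR', τx'⟩ := e'
  have hG' : (G *ᵥ ϖ) ⬝ᵥ ϖ' = -((G *ᵥ ϖ') ⬝ᵥ ϖ) := by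
    rw [mulVec_dotProduct_comm, hG, neg_mulVec, neg_dotProduct]
  have hB : ∀ u v, (Bᵀ *ᵥ u) ⬝ᵥ v = (B *ᵥ v) ⬝ᵥ u := fun u v => by
    rw [mulVec_dotProduct_comm, transpose_transpose]
  simp only [pairing_apply, pairVpqm, structureMap_apply, neg_dotProduct, add_dotProduct]
  linear_combination mulVec_dotProduct_comm Z ϖ τ' + mulVec_dotProduct_comm Z ϖ' τ - hG'
    + hB ϖ τx' + hB ϖ' τx + dotProduct_comm ϖ τR' + dotProduct_comm ϖ' τR

theorem pairing_constraintFlow (A : Matrix (Fin ℓ) (Fin q) ℝ) (μ : Fin ℓ → ℝ) (e : Vpqm p q m) :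
    pairing (0, Aᵀ *ᵥ μ, 0, 0) e = (A *ᵥ e.2.1) ⬝ᵥ μ := by
  simp only [pairing_apply, pairVpqm, zero_dotProduct, add_zero, zero_add]
  rw [mulVec_dotProduct_comm, transpose_transpose]

theorem orthogonal_constraintFlows (A : Matrix (Fin ℓ) (Fin q) ℝ) :
    pairing.orthogonal (constraintFlows A) = (constrainedEfforts A : Submodule ℝ (Vpqm p q m)) := by
  ext e
  rw [LinearMap.BilinForm.mem_orthogonal_iff, mem_constrainedEfforts]
  constructor
  · intro h
    have := h _ (mem_constraintFlows.mpr ⟨A *ᵥ e.2.1, rfl⟩)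
    rwa [pairing_constraintFlow, dotProduct_self_eq_zero] at this
  · intro he k hk
    obtain ⟨μ, rfl⟩ := mem_constraintFlows.mp hk
    rw [pairing_constraintFlow, he, zero_dotProduct]

theorem flip_orthogonal_constrainedEfforts (A : Matrix (Fin ℓ) (Fin q) ℝ) :
    pairing.flip.orthogonal (constrainedEfforts A) =
      (constraintFlows A : Submodule ℝ (Vpqm p q m)) := by
  ext k
  simp only [LinearMap.BilinForm.mem_orthogonal_iff, LinearMap.BilinForm.flip_apply,
    mem_constraintFlows, mem_constrainedEfforts]
  constructor
  · intro h
    have h₁ : k.1 = 0 := dotProduct_self_eq_zero.mp <| by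
      simpa [pairing_apply, pairVpqm] using h (k.1, 0, 0, 0) (mulVec_zero A)
    have h₃ : k.2.2.1 = 0 := dotProduct_self_eq_zero.mp <| by
      simpa [pairing_apply, pairVpqm] using h (0, 0, k.2.2.1, 0) (mulVec_zero A)
    have h₄ : k.2.2.2 = 0 := dotProduct_self_eq_zero.mp <| by
      simpa [pairing_apply, pairVpqm] using h (0, 0, 0, k.2.2.2) (mulVec_zero A)
    obtain ⟨μ, hμ⟩ := exists_transpose_mulVec_eq_of_orthogonal_ker A k.2.1 fun w hw => by
      simpa [pairing_apply, pairVpqm, dotProduct_comm] using h (0, w, 0, 0) hw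
    exact ⟨μ, Prod.ext h₁ (Prod.ext hμ.symm (Prod.ext h₃ h₄))⟩
  · rintro ⟨μ, rfl⟩ e he
    rw [pairing_constraintFlow, he, zero_dotProduct]

theorem mem_constrainedEfforts_and_sub_structureMap_mem_constraintFlows_iff
    {Z : Matrix (Fin p) (Fin q) ℝ} {G : Matrix (Fin q) (Fin q) ℝ} {A : Matrix (Fin ℓ) (Fin q) ℝ}
    {B : Matrix (Fin q) (Fin m) ℝ} {f e : Vpqm p q m} :
    e ∈ constrainedEfforts A ∧ f - structureMap Z G B e ∈ constraintFlows A ↔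
      f.1 = Z *ᵥ e.2.1 ∧ f.2.2.1 = e.2.1 ∧ A *ᵥ e.2.1 = 0 ∧ f.2.2.2 = Bᵀ *ᵥ e.2.1 ∧
        ∃ μ, f.2.1 + Zᵀ *ᵥ e.1 + G *ᵥ e.2.1 + e.2.2.1 + B *ᵥ e.2.2.2 + Aᵀ *ᵥ μ = 0 := by
  simp only [mem_constrainedEfforts, mem_constraintFlows, structureMap_apply, Prod.ext_iff,
    Prod.fst_sub, Prod.snd_sub, sub_eq_zero]
  constructor
  · rintro ⟨hA, μ, h₁, hτ, h₃, h₄⟩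
    exact ⟨h₁, h₃, hA, h₄, -μ, by rw [mulVec_neg, ← hτ]; abel⟩
  · rintro ⟨h₁, h₃, hA, h₄, μ, hτ⟩
    exact ⟨hA, -μ, h₁, by rw [mulVec_neg]; linear_combination hτ, h₃, h₄⟩

end Vpqm

/-- For `Z ∈ ℝ^{p×q}`, skew-symmetric `G ∈ ℝ^{q×q}`, `A ∈ ℝ^{ℓ×q}`, `B ∈ ℝ^{q×m}`, the set of
pairs of flows `(ϖ_Lf, τ_Lf, ϖ_R, ϖ_ext)` and efforts `(τ_Le, ϖ_Le, τ_R, τ_ext)` satisfying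
`ϖ_Lf = Z ϖ_Le`, `ϖ_R = ϖ_Le`, `A ϖ_Le = 0`, `ϖ_ext = Bᵀ ϖ_Le` and
`τ_Lf + Zᵀ τ_Le + G ϖ_Le + τ_R + B τ_ext + Aᵀ μ = 0` for some `μ ∈ ℝ^ℓ`, is a Dirac
structure in `ℝ^{p+2q+m} × ℝ^{p+2q+m}`. -/
theorem multibody_isDirac {p q m ℓ : ℕ}
    (Z : Matrix (Fin p) (Fin q) ℝ) (G : Matrix (Fin q) (Fin q) ℝ) (hG : Gᵀ = -G)
    (A : Matrix (Fin ℓ) (Fin q) ℝ) (B : Matrix (Fin q) (Fin m) ℝ) :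
    IsDiracPair pairVpqm
      {x : Vpqm p q m × Vpqm p q m |
        x.1.1 = Z *ᵥ x.2.2.1 ∧ x.1.2.2.1 = x.2.2.1 ∧
        A *ᵥ x.2.2.1 = 0 ∧
        x.1.2.2.2 = Bᵀ *ᵥ x.2.2.1 ∧
        ∃ μ : Fin ℓ → ℝ,
          x.1.2.1 + Zᵀ *ᵥ x.2.1 + G *ᵥ x.2.2.1 + x.2.2.2.1 + B *ᵥ x.2.2.2.2
            + Aᵀ *ᵥ μ = 0} := by
  have h := isDiracPair_of_skew Vpqm.pairing (Vpqm.structureMap Z G B)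
    (Vpqm.constrainedEfforts A) (Vpqm.constraintFlows A)
    (fun e _ e' _ => Vpqm.pairing_structureMap_antisymm Z hG B e e')
    (Vpqm.orthogonal_constraintFlows A) (Vpqm.flip_orthogonal_constrainedEfforts A)
  convert h using 1
  · rfl
  · ext x
    exact Vpqm.mem_constrainedEfforts_and_sub_structureMap_mem_constraintFlows_iff.symm
end

section
/- Let U_pos ⊆ ℝ^{n_pot} be open, let A : U_pos → ℝ^{ℓ×n_kin}, B : U_pos → ℝ^{n_kin×m}, G : ℝ^{n_kin} → ℝ^{n_kin×n_kin}, Z : U_pos → ℝ^{n_pot×n_kin} be continuous, assume A has constant rank on U_pos, and assume G(Γ) is skew-symmetric for every Γ ∈ ℝ^{n_kin}. For (ζ,Γ) ∈ U_pos × ℝ^{n_kin} and N := n_pot + 2 n_kin + m, let D_{(ζ,Γ)} ⊆ ℝ^N × ℝ^N be the set of all pairs of flows (ϖ_Lf, τ_Lf, ϖ_R, ϖ_ext) and efforts (τ_Le, ϖ_Le, τ_R, τ_ext) with ϖ_Lf = Z(ζ) ϖ_Le, ϖ_R = ϖ_Le, A(ζ) ϖ_Le = 0, ϖ_ext = B(ζ)ᵀ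 ϖ_Le, and ∃ μ ∈ ℝ^ℓ with τ_Lf + Z(ζ)ᵀ τ_Le + G(Γ) ϖ_Le + τ_R + B(ζ) τ_ext + A(ζ)ᵀ μ = 0. Then the family (D_{(ζ,Γ)})_{(ζ,Γ) ∈ U_pos × ℝ^{n_kin}} is a modulated Dirac structure. -/
open Matrix

/-!
Each `D_{(ζ,Γ)}` is Lagrangian. Pairing two of its elements leaves only the constraint-force
terms `μ ⬝ A(ζ) ϖ_Le`, which vanish; pairing an arbitrary `(f, e)` against well-chosen elements
of `D` recovers each defining relation, the last one because a vector orthogonal to `ker A(ζ)`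
lies in the range of `A(ζ)ᵀ`.

An element of `D` is determined by its effort, where `ϖ_Le ∈ ker A(ζ)`, and by its constraint
force `A(ζ)ᵀ μ`. With `P` the orthogonal projection onto the row space of `A(ζ)`, sending
`(τ_Le, v, τ_R, τ_ext)` to the element with `ϖ_Le = (1 - P) v` and constraint force `-P v` is
therefore a linear isomorphism onto `D`. Constant rank makes `P` continuous: if `S A(ζ₀)` has
full row rank `ρ`, then near `ζ₀` the Gram matrix of `B = S A(ζ)` stays invertible, so
`ker B = ker A(ζ)` by counting dimensions, and `P = Bᵀ (B Bᵀ)⁻¹ B`.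
-/

namespace Matrix

variable {k m n : Type*} [Fintype m] [Fintype n]

theorem mulVec_dotProduct (M : Matrix m n ℝ) (x : n → ℝ) (y : m → ℝ) :
    (M *ᵥ x) ⬝ᵥ y = x ⬝ᵥ (Mᵀ *ᵥ y) := by
  rw [dotProduct_comm, dotProduct_transpose_mulVec]

theorem exists_transpose_mulVec_eq_of_forall_dotProduct {A : Matrix m n ℝ} {w : n → ℝ}
    (hw : ∀ v, A *ᵥ v = 0 → w ⬝ᵥ v = 0) : ∃ μ, Aᵀ *ᵥ μ = w := by
  classical
  have hmem : WithLp.toLp 2 w ∈ (toEuclideanLin A).adjoint.range := by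
    rw [← LinearMap.orthogonal_ker]
    intro v hv
    simpa [EuclideanSpace.inner_eq_star_dotProduct, dotProduct_comm] using
      hw v.ofLp (congrArg WithLp.ofLp hv)
  rw [← toEuclideanLin_conjTranspose_eq_adjoint, conjTranspose_eq_transpose_of_trivial] at hmem
  obtain ⟨μ, hμ⟩ := hmem
  exact ⟨μ.ofLp, by simpa using congrArg WithLp.ofLp hμ⟩

theorem isUnit_of_rank_eq_card [DecidableEq n] {M : Matrix n n ℝ}
    (h : M.rank = Fintype.card n) : IsUnit M := by
  have hrange : LinearMap.range M.mulVecLin = ⊤ :=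
    Submodule.eq_top_of_finrank_eq (by rw [← rank, h, Module.finrank_fintype_fun_eq_card])
  exact mulVec_injective_iff_isUnit.mp
    (LinearMap.injective_iff_surjective.mpr (LinearMap.range_eq_top.mp hrange))

theorem ker_mulVecLin_mul_eq_of_rank_eq_s7 [Fintype k] (S : Matrix k m ℝ) (A : Matrix m n ℝ)
    (h : (S * A).rank = A.rank) :
    LinearMap.ker (S * A).mulVecLin = LinearMap.ker A.mulVecLin := by
  refine (Submodule.eq_of_le_of_finrank_eq ?_ ?_).symm
  · intro v hv
    simp only [LinearMap.mem_ker, mulVecLin_apply, ← mulVec_mulVec] at hv ⊢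
    rw [hv, mulVec_zero]
  · have hA := LinearMap.finrank_range_add_finrank_ker A.mulVecLin
    have hSA := LinearMap.finrank_range_add_finrank_ker (S * A).mulVecLin
    rw [← rank] at hA hSA
    omega

theorem exists_rank_mul_eq (A : Matrix m n ℝ) :
    ∃ S : Matrix (Fin A.rank) m ℝ, (S * A).rank = A.rank := by
  classical
  obtain ⟨g, hg⟩ : ∃ g : (m → ℝ) →ₗ[ℝ] (Fin A.rank → ℝ),
      g ∘ₗ (LinearMap.range A.mulVecLin).subtype =
        (Module.finBasis ℝ (LinearMap.range A.mulVecLin)).equivFun.toLinearMap :=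
    LinearMap.exists_extend _
  refine ⟨LinearMap.toMatrix' g, le_antisymm (rank_mul_le_right _ _) ?_⟩
  have hsurj : LinearMap.range (LinearMap.toMatrix' g * A).mulVecLin = ⊤ := by
    refine LinearMap.range_eq_top.mpr fun y => ?_
    obtain ⟨⟨_, v, rfl⟩, hv⟩ :=
      (Module.finBasis ℝ (LinearMap.range A.mulVecLin)).equivFun.surjective y
    refine ⟨v, ?_⟩
    rw [mulVecLin_apply, ← mulVec_mulVec, ← hv, ← toLin'_apply, toLin'_toMatrix']
    exact LinearMap.congr_fun hg ⟨A.mulVecLin v, v, rfl⟩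
  change _ ≤ Module.finrank ℝ (LinearMap.range _)
  rw [hsurj, finrank_top, Module.finrank_fin_fun]

theorem _root_.ContinuousOn.matrix_inv {X : Type*} [TopologicalSpace X] {s : Set X}
    [DecidableEq n] {M : X → Matrix n n ℝ} (hM : ContinuousOn M s)
    (hdet : ∀ x ∈ s, (M x).det ≠ 0) : ContinuousOn (fun x => (M x)⁻¹) s := by
  have : ContinuousOn (fun x => (M x).det⁻¹ • (M x).adjugate) s :=
    (ContinuousOn.inv₀ (by fun_prop) hdet).smul (by fun_prop)
  refine this.congr fun x _ => ?_
  simp [inv_def, Ring.inverse_eq_inv']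

/-- `P` is the orthogonal projection onto the row space of `A`. -/
structure IsRowSpaceProj (A : Matrix m n ℝ) (P : Matrix n n ℝ) : Prop where
  transpose_eq : Pᵀ = P
  mul_eq : A * P = A
  exists_eq_transpose_mul : ∃ Y : Matrix m n ℝ, P = Aᵀ * Y

namespace IsRowSpaceProj

variable {A : Matrix m n ℝ} {P : Matrix n n ℝ}

theorem mul_transpose (hP : IsRowSpaceProj A P) : P * Aᵀ = Aᵀ := by
  simpa [transpose_mul, hP.transpose_eq] using congrArg transpose hP.mul_eq

theorem mulVec_eq_zero (hP : IsRowSpaceProj A P) {v : n → ℝ} (hv : A *ᵥ v = 0) :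
    P *ᵥ v = 0 := by
  obtain ⟨Y, hY⟩ := hP.exists_eq_transpose_mul
  rw [← hP.transpose_eq, hY, transpose_mul, transpose_transpose, ← mulVec_mulVec, hv,
    mulVec_zero]

end IsRowSpaceProj

theorem isRowSpaceProj_of_ker_eq [Fintype k] [DecidableEq k] {B : Matrix k n ℝ}
    {A : Matrix m n ℝ} (hdet : (B * Bᵀ).det ≠ 0)
    (hker : LinearMap.ker B.mulVecLin = LinearMap.ker A.mulVecLin) {S : Matrix k m ℝ}
    (hBA : B = S * A) : IsRowSpaceProj A (Bᵀ * (B * Bᵀ)⁻¹ * B) where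
  transpose_eq := by
    simp only [transpose_mul, transpose_transpose, transpose_nonsing_inv, Matrix.mul_assoc]
  mul_eq := by
    have hB : B * (Bᵀ * (B * Bᵀ)⁻¹ * B) = B := by
      rw [← Matrix.mul_assoc, ← Matrix.mul_assoc,
        mul_nonsing_inv _ (isUnit_iff_ne_zero.mpr hdet), Matrix.one_mul]
    refine ext_iff_mulVec.mpr fun v => ?_
    have hv : v - (Bᵀ * (B * Bᵀ)⁻¹ * B) *ᵥ v ∈ LinearMap.ker A.mulVecLin := by
      rw [← hker, LinearMap.mem_ker, mulVecLin_apply, mulVec_sub, mulVec_mulVec, hB, sub_self]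
    rw [LinearMap.mem_ker, mulVecLin_apply, mulVec_sub, sub_eq_zero] at hv
    rw [hv, mulVec_mulVec]
  exists_eq_transpose_mul := ⟨Sᵀ * (B * Bᵀ)⁻¹ * B, by
    nth_rewrite 1 [hBA]
    simp only [transpose_mul, Matrix.mul_assoc]⟩

theorem exists_continuousOn_isRowSpaceProj {X : Type*} [TopologicalSpace X] {U : Set X}
    (hU : IsOpen U) {A : X → Matrix m n ℝ} (hA : ContinuousOn A U)
    (hrank : ∃ ρ : ℕ, ∀ x ∈ U, (A x).rank = ρ) {x₀ : X} (hx₀ : x₀ ∈ U) :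
    ∃ V, IsOpen V ∧ x₀ ∈ V ∧ V ⊆ U ∧ ∃ P : X → Matrix n n ℝ,
      ContinuousOn P V ∧ ∀ x ∈ V, IsRowSpaceProj (A x) (P x) := by
  obtain ⟨ρ, hρ⟩ := hrank
  obtain ⟨S, hS⟩ := exists_rank_mul_eq (A x₀)
  have hgram : ContinuousOn (fun x => (S * A x * (S * A x)ᵀ).det) U := by fun_prop
  set V := U ∩ (fun x => (S * A x * (S * A x)ᵀ).det) ⁻¹' {0}ᶜ
  refine ⟨V, hgram.isOpen_inter_preimage hU isOpen_compl_singleton, ⟨hx₀, ?_⟩,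
    Set.inter_subset_left, fun x => (S * A x)ᵀ * (S * A x * (S * A x)ᵀ)⁻¹ * (S * A x),
    ?_, fun x hx => isRowSpaceProj_of_ker_eq hx.2 ?_ rfl⟩
  · have hunit := isUnit_of_rank_eq_card (M := S * A x₀ * (S * A x₀)ᵀ)
      (by rw [rank_self_mul_transpose, hS, Fintype.card_fin])
    exact ((isUnit_iff_isUnit_det _).mp hunit).ne_zero
  · have hAV : ContinuousOn A V := hA.mono Set.inter_subset_left
    have hinv : ContinuousOn (fun x => (S * A x * (S * A x)ᵀ)⁻¹) V :=
      ContinuousOn.matrix_inv (by fun_prop) fun x hx => hx.2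
    clear_value V
    fun_prop
  · refine ker_mulVecLin_mul_eq_of_rank_eq_s7 S (A x) ?_
    have hgram_rank := rank_of_det_ne_zero hx.2
    rw [rank_self_mul_transpose, Fintype.card_fin] at hgram_rank
    exact hgram_rank.trans ((hρ x₀ hx₀).trans (hρ x hx.1).symm)

end Matrix

namespace Multibody

variable {p q m l : ℕ} (Z : Matrix (Fin p) (Fin q) ℝ) (A : Matrix (Fin l) (Fin q) ℝ)
  (B : Matrix (Fin q) (Fin m) ℝ) (G : Matrix (Fin q) (Fin q) ℝ)

def diracSet : Set (Vpqm p q m × Vpqm p q m) :=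
  {x | x.1.1 = Z *ᵥ x.2.2.1 ∧ x.1.2.2.1 = x.2.2.1 ∧ A *ᵥ x.2.2.1 = 0 ∧
    x.1.2.2.2 = Bᵀ *ᵥ x.2.2.1 ∧
    ∃ μ : Fin l → ℝ,
      x.1.2.1 + Zᵀ *ᵥ x.2.1 + G *ᵥ x.2.2.1 + x.2.2.2.1 + B *ᵥ x.2.2.2.2 + Aᵀ *ᵥ μ = 0}

/-- The pair with effort `e` whose flow satisfies the relations of `diracSet`, with `w` in place
of the constraint force `A(ζ)ᵀ μ`. -/
def flowEffort (e : Vpqm p q m) (w : Fin q → ℝ) : Vpqm p q m × Vpqm p q m :=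
  ((Z *ᵥ e.2.1, -(Zᵀ *ᵥ e.1 + G *ᵥ e.2.1 + e.2.2.1 + B *ᵥ e.2.2.2 + w), e.2.1,
    Bᵀ *ᵥ e.2.1), e)

variable {Z A B G}

theorem flowEffort_mem {e : Vpqm p q m} (he : A *ᵥ e.2.1 = 0) (μ : Fin l → ℝ) :
    flowEffort Z B G e (Aᵀ *ᵥ μ) ∈ diracSet Z A B G :=
  ⟨rfl, rfl, he, rfl, μ, by simp only [flowEffort]; abel⟩

theorem eq_flowEffort_of_mem {x : Vpqm p q m × Vpqm p q m} (hx : x ∈ diracSet Z A B G) :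
    A *ᵥ x.2.2.1 = 0 ∧ ∃ μ, x = flowEffort Z B G x.2 (Aᵀ *ᵥ μ) := by
  obtain ⟨⟨f₁, f₂, f₃, f₄⟩, e⟩ := x
  obtain ⟨h₁, h₃, hA, h₄, μ, h₂⟩ := hx
  refine ⟨hA, μ, ?_⟩
  simp only at h₁ h₃ h₄ h₂
  simp only [flowEffort, h₁, h₃, h₄, Prod.mk.injEq, and_true, true_and]
  rw [eq_neg_iff_add_eq_zero, ← h₂]
  abel

theorem pairing_flowEffort (hG : Gᵀ = -G) (f e d : Vpqm p q m) (w : Fin q → ℝ) :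
    pairVpqm (flowEffort Z B G d w).1 e + pairVpqm f d =
      d.1 ⬝ᵥ (f.1 - Z *ᵥ e.2.1)
        + d.2.1 ⬝ᵥ (f.2.1 + Zᵀ *ᵥ e.1 + G *ᵥ e.2.1 + e.2.2.1 + B *ᵥ e.2.2.2)
        + d.2.2.1 ⬝ᵥ (f.2.2.1 - e.2.1) + d.2.2.2 ⬝ᵥ (f.2.2.2 - Bᵀ *ᵥ e.2.1)
        - w ⬝ᵥ e.2.1 := by
  obtain ⟨f₁, f₂, f₃, f₄⟩ := f
  obtain ⟨e₁, e₂, e₃, e₄⟩ := e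
  obtain ⟨d₁, d₂, d₃, d₄⟩ := d
  simp only [flowEffort, pairVpqm, dotProduct_add, dotProduct_sub, neg_dotProduct,
    add_dotProduct, mulVec_dotProduct, hG, transpose_transpose, neg_mulVec, dotProduct_neg]
  simp only [dotProduct_comm d₁, dotProduct_comm d₂, dotProduct_comm d₃, dotProduct_comm d₄]
  ring

theorem pairing_eq_zero_of_mem (hG : Gᵀ = -G) {x y : Vpqm p q m × Vpqm p q m}
    (hx : x ∈ diracSet Z A B G) (hy : y ∈ diracSet Z A B G) :
    pairVpqm y.1 x.2 + pairVpqm x.1 y.2 = 0 := by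
  obtain ⟨f, e⟩ := x
  obtain ⟨he, μ, hxμ⟩ := eq_flowEffort_of_mem hx
  obtain ⟨hd, ν, hyν⟩ := eq_flowEffort_of_mem hy
  obtain rfl : f = (flowEffort Z B G e (Aᵀ *ᵥ μ)).1 := congrArg Prod.fst hxμ
  rw [hyν]
  refine (pairing_flowEffort hG _ e y.2 _).trans ?_
  have hres : -(Zᵀ *ᵥ e.1 + G *ᵥ e.2.1 + e.2.2.1 + B *ᵥ e.2.2.2 + Aᵀ *ᵥ μ)
      + Zᵀ *ᵥ e.1 + G *ᵥ e.2.1 + e.2.2.1 + B *ᵥ e.2.2.2 = -(Aᵀ *ᵥ μ) := by abel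
  simp only [flowEffort, hres, sub_self, dotProduct_zero, neg_dotProduct,
    dotProduct_comm y.2.2.1, mulVec_dotProduct, transpose_transpose, hd, he, add_zero, neg_zero]

theorem mem_diracSet_of_forall_pairing_eq_zero (hG : Gᵀ = -G) {f e : Vpqm p q m}
    (H : ∀ y ∈ diracSet Z A B G, pairVpqm y.1 e + pairVpqm f y.2 = 0) :
    (f, e) ∈ diracSet Z A B G := by
  have htest : ∀ (d : Vpqm p q m) (μ : Fin l → ℝ), A *ᵥ d.2.1 = 0 →
      d.1 ⬝ᵥ (f.1 - Z *ᵥ e.2.1)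
        + d.2.1 ⬝ᵥ (f.2.1 + Zᵀ *ᵥ e.1 + G *ᵥ e.2.1 + e.2.2.1 + B *ᵥ e.2.2.2)
        + d.2.2.1 ⬝ᵥ (f.2.2.1 - e.2.1) + d.2.2.2 ⬝ᵥ (f.2.2.2 - Bᵀ *ᵥ e.2.1)
        - (Aᵀ *ᵥ μ) ⬝ᵥ e.2.1 = 0 := fun d μ hd =>
    (pairing_flowEffort hG f e d _).symm.trans (H _ (flowEffort_mem hd μ))
  have h₁ : f.1 = Z *ᵥ e.2.1 := by
    have h := htest (f.1 - Z *ᵥ e.2.1, 0, 0, 0) 0 (mulVec_zero A)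
    simp only [zero_dotProduct, mulVec_zero, add_zero, sub_zero] at h
    exact sub_eq_zero.mp (dotProduct_self_eq_zero.mp h)
  have h₃ : f.2.2.1 = e.2.1 := by
    have h := htest (0, 0, f.2.2.1 - e.2.1, 0) 0 (mulVec_zero A)
    simp only [zero_dotProduct, mulVec_zero, add_zero, zero_add, sub_zero] at h
    exact sub_eq_zero.mp (dotProduct_self_eq_zero.mp h)
  have h₄ : f.2.2.2 = Bᵀ *ᵥ e.2.1 := by
    have h := htest (0, 0, 0, f.2.2.2 - Bᵀ *ᵥ e.2.1) 0 (mulVec_zero A)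
    simp only [zero_dotProduct, mulVec_zero, add_zero, zero_add, sub_zero] at h
    exact sub_eq_zero.mp (dotProduct_self_eq_zero.mp h)
  have hA : A *ᵥ e.2.1 = 0 := by
    have h := htest 0 (A *ᵥ e.2.1) (mulVec_zero A)
    simp only [Prod.fst_zero, Prod.snd_zero, zero_dotProduct, add_zero, zero_sub,
      neg_eq_zero] at h
    rw [mulVec_dotProduct, transpose_transpose] at h
    exact dotProduct_self_eq_zero.mp h
  obtain ⟨μ, hμ⟩ := exists_transpose_mulVec_eq_of_forall_dotProduct fun v hv => by
    have h := htest (0, v, 0, 0) 0 hv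
    simp only [zero_dotProduct, mulVec_zero, add_zero, zero_add, sub_zero] at h
    rwa [dotProduct_comm] at h
  exact ⟨h₁, h₃, hA, h₄, -μ, by rw [mulVec_neg, hμ, add_neg_cancel]⟩

theorem isDiracPair_diracSet (hG : Gᵀ = -G) : IsDiracPair pairVpqm (diracSet Z A B G) :=
  fun _ => ⟨fun hx _ hy => pairing_eq_zero_of_mem hG hx hy,
    mem_diracSet_of_forall_pairing_eq_zero hG⟩

variable (Z B G) in
def trivialization (P : Matrix (Fin q) (Fin q) ℝ) :
    Vpqm p q m →ₗ[ℝ] Vpqm p q m × Vpqm p q m where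
  toFun u := flowEffort Z B G (u.1, (1 - P) *ᵥ u.2.1, u.2.2) (-(P *ᵥ u.2.1))
  map_add' u v := by
    simp only [flowEffort, Prod.fst_add, Prod.snd_add, mulVec_add, neg_add, Prod.mk_add_mk]
    congr 3
    abel
  map_smul' c u := by
    simp only [flowEffort, Prod.smul_fst, Prod.smul_snd, mulVec_smul, Prod.smul_mk,
      RingHom.id_apply, smul_neg, smul_add]

theorem trivialization_injective (P : Matrix (Fin q) (Fin q) ℝ) :
    Function.Injective (trivialization (p := p) (m := m) Z B G P) := by
  rw [← LinearMap.ker_eq_bot, LinearMap.ker_eq_bot']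
  rintro ⟨u₁, u₂, u₃⟩ hu
  simp only [trivialization, flowEffort, LinearMap.coe_mk, AddHom.coe_mk, Prod.ext_iff,
    Prod.fst_zero, Prod.snd_zero] at hu
  obtain ⟨⟨-, hflow, -, -⟩, rfl, hker, h₃, h₄⟩ := hu
  have hPu : P *ᵥ u₂ = 0 := by simpa [hker, h₃, h₄] using hflow
  have hu₂ : u₂ = 0 := by rwa [sub_mulVec, one_mulVec, hPu, sub_zero] at hker
  simp [hu₂, Prod.ext_iff, h₃, h₄]

theorem range_trivialization {P : Matrix (Fin q) (Fin q) ℝ} (hP : IsRowSpaceProj A P) :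
    Set.range (trivialization (p := p) (m := m) Z B G P) = diracSet Z A B G := by
  ext x
  constructor
  · rintro ⟨u, rfl⟩
    obtain ⟨Y, hY⟩ := hP.exists_eq_transpose_mul
    have hforce : -(P *ᵥ u.2.1) = Aᵀ *ᵥ -(Y *ᵥ u.2.1) := by
      rw [mulVec_neg, mulVec_mulVec, ← hY]
    have hker : A *ᵥ ((1 - P) *ᵥ u.2.1) = 0 := by
      rw [mulVec_mulVec, Matrix.mul_sub, Matrix.mul_one, hP.mul_eq, sub_self, zero_mulVec]
    simp only [trivialization, LinearMap.coe_mk, AddHom.coe_mk, hforce]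
    exact flowEffort_mem hker _
  · intro hx
    obtain ⟨he, μ, hxμ⟩ := eq_flowEffort_of_mem hx
    have hproj : P *ᵥ (x.2.2.1 - Aᵀ *ᵥ μ) = -(Aᵀ *ᵥ μ) := by
      rw [mulVec_sub, hP.mulVec_eq_zero he, mulVec_mulVec, hP.mul_transpose, zero_sub]
    refine ⟨(x.2.1, x.2.2.1 - Aᵀ *ᵥ μ, x.2.2.2), ?_⟩
    conv_rhs => rw [hxμ]
    simp only [trivialization, LinearMap.coe_mk, AddHom.coe_mk, sub_mulVec, one_mulVec, hproj,
      sub_neg_eq_add, sub_add_cancel, neg_neg]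

theorem continuous_trivialization_apply (u : Vpqm p q m) :
    Continuous fun M : Matrix (Fin p) (Fin q) ℝ × Matrix (Fin q) (Fin m) ℝ ×
        Matrix (Fin q) (Fin q) ℝ × Matrix (Fin q) (Fin q) ℝ =>
      trivialization M.1 M.2.1 M.2.2.1 M.2.2.2 u := by
  simp only [trivialization, flowEffort, LinearMap.coe_mk, AddHom.coe_mk]
  fun_prop

end Multibody

/-- For continuous `A : U_pos → ℝ^{ℓ×n_kin}` of constant rank, continuous
`B : U_pos → ℝ^{n_kin×m}`, `Z : U_pos → ℝ^{n_pot×n_kin}` and continuous pointwise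
skew-symmetric `G : ℝ^{n_kin} → ℝ^{n_kin×n_kin}`, the family of sets of pairs of flows
`(ϖ_Lf, τ_Lf, ϖ_R, ϖ_ext)` and efforts `(τ_Le, ϖ_Le, τ_R, τ_ext)` with
`ϖ_Lf = Z(ζ) ϖ_Le`, `ϖ_R = ϖ_Le`, `A(ζ) ϖ_Le = 0`, `ϖ_ext = B(ζ)ᵀ ϖ_Le` and
`τ_Lf + Z(ζ)ᵀ τ_Le + G(Γ) ϖ_Le + τ_R + B(ζ) τ_ext + A(ζ)ᵀ μ = 0` for some `μ`,
indexed by `(ζ,Γ) ∈ U_pos × ℝ^{n_kin}`, is a modulated Dirac structure. -/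
theorem multibody_isModulatedDirac {npot nkin m ℓ : ℕ}
    (Upos : Set (Fin npot → ℝ)) (hUpos : IsOpen Upos)
    (A : (Fin npot → ℝ) → Matrix (Fin ℓ) (Fin nkin) ℝ)
    (B : (Fin npot → ℝ) → Matrix (Fin nkin) (Fin m) ℝ)
    (G : (Fin nkin → ℝ) → Matrix (Fin nkin) (Fin nkin) ℝ)
    (Z : (Fin npot → ℝ) → Matrix (Fin npot) (Fin nkin) ℝ)
    (hA : ContinuousOn A Upos) (hB : ContinuousOn B Upos)
    (hG : Continuous G) (hZ : ContinuousOn Z Upos)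
    (hrank : ∃ ρ : ℕ, ∀ ζ ∈ Upos, (A ζ).rank = ρ)
    (hskew : ∀ Γ : Fin nkin → ℝ, (G Γ)ᵀ = -(G Γ)) :
    IsModulatedDirac (Fin (npot + 2 * nkin + m) → ℝ) pairVpqm
      (Upos ×ˢ (Set.univ : Set (Fin nkin → ℝ)))
      (fun ζΓ => {x : Vpqm npot nkin m × Vpqm npot nkin m |
        x.1.1 = Z ζΓ.1 *ᵥ x.2.2.1 ∧ x.1.2.2.1 = x.2.2.1 ∧
        A ζΓ.1 *ᵥ x.2.2.1 = 0 ∧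
        x.1.2.2.2 = (B ζΓ.1)ᵀ *ᵥ x.2.2.1 ∧
        ∃ μ : Fin ℓ → ℝ,
          x.1.2.1 + (Z ζΓ.1)ᵀ *ᵥ x.2.1 + G ζΓ.2 *ᵥ x.2.2.1 + x.2.2.2.1
            + B ζΓ.1 *ᵥ x.2.2.2.2 + (A ζΓ.1)ᵀ *ᵥ μ = 0}) := by
  refine ⟨fun ζΓ _ => Multibody.isDiracPair_diracSet (hskew ζΓ.2), ?_⟩
  rintro ⟨ζ₀, Γ₀⟩ ⟨hζ₀, -⟩
  obtain ⟨V, hVopen, hζ₀V, hVU, P, hP, hPproj⟩ :=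
    Matrix.exists_continuousOn_isRowSpaceProj hUpos hA hrank hζ₀
  let e : (Fin (npot + 2 * nkin + m) → ℝ) ≃ₗ[ℝ] Vpqm npot nkin m :=
    LinearEquiv.ofFinrankEq _ _ (by simp [Module.finrank_prod]; omega)
  have hfst : Set.MapsTo Prod.fst (V ×ˢ (Set.univ : Set (Fin nkin → ℝ))) V := fun y hy => hy.1
  refine ⟨V ×ˢ Set.univ, hVopen.prod isOpen_univ, ⟨hζ₀V, trivial⟩,
    Set.prod_mono hVU le_rfl,
    fun y => (Multibody.trivialization (Z y.1) (B y.1) (G y.2) (P y.1)).comp e.toLinearMap,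
    fun y hy => ⟨(Multibody.trivialization_injective _).comp e.injective, ?_⟩,
    fun z => ?_⟩
  · rw [LinearMap.coe_comp, LinearEquiv.coe_coe, e.surjective.range_comp]
    exact Multibody.range_trivialization (hPproj y.1 hy.1)
  · exact (Multibody.continuous_trivialization_apply (e z)).comp_continuousOn
      (((hZ.mono hVU).comp continuousOn_fst hfst).prodMk
        (((hB.mono hVU).comp continuousOn_fst hfst).prodMk
          ((hG.comp continuous_snd).continuousOn.prodMk (hP.comp continuousOn_fst hfst))))
end

section
/- Let D ⊆ ℝ^n × ℝ^n be a Dirac structure and let E ∈ ℝ^{ℓ×n}. Then D̃ := {(f,e) ∈ ℝ^n × ℝ^n : E e = 0 and there exists μ ∈ ℝ^ℓ with (f + Eᵀμ, e) ∈ D} is again a Dirac structure. -/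
/-!
Writing `⟨p, q⟩ = q₁ᵀp₂ + p₁ᵀq₂`, shifting `f` by `Eᵀμ` changes `⟨(f, e), q⟩` by `μᵀE q₂`, which
vanishes on the constraint `E q₂ = 0`; hence `D̃` is isotropic. Conversely, let `p = (f, e)`
annihilate `D̃`. Testing against `(Eᵀ E e, 0) ∈ D̃` gives `|E e|² = 0`. On the subspace `D` the
functional `q ↦ ⟨p, q⟩` vanishes wherever `E q₂ = 0`, so it equals `q ↦ cᵀE q₂` for some `c`;
this says that `(f - Eᵀc, e)` annihilates `D`, i.e. lies in `D`.
-/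

open Matrix

/-- A subset `D ⊆ ℝ^N × ℝ^N` is a Dirac structure if membership in `D` is equivalent to
being "orthogonal" to all of `D` with respect to the pairing `(f,e),(f̂,ê) ↦ f̂ᵀe + fᵀê`. -/
def IsDirac {N : ℕ} (D : Set ((Fin N → ℝ) × (Fin N → ℝ))) : Prop :=
  ∀ p : (Fin N → ℝ) × (Fin N → ℝ),
    p ∈ D ↔ ∀ q ∈ D, q.1 ⬝ᵥ p.2 + p.1 ⬝ᵥ q.2 = 0

open LinearMap

theorem exists_dotProduct_eq_of_ker_le_ker {K V ι : Type*} [Field K] [AddCommGroup V]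
    [Module K V] [Fintype ι] {A : V →ₗ[K] ι → K} {φ : V →ₗ[K] K} (h : ker A ≤ ker φ) :
    ∃ c : ι → K, ∀ v, φ v = c ⬝ᵥ A v := by
  have hA : ker A = ⨅ i, ker ((proj i).comp A) := by
    rw [← ker_pi]; rfl
  obtain ⟨c, hc⟩ :=
    (Submodule.mem_span_range_iff_exists_fun K).1 (mem_span_of_iInf_ker_le_ker (hA ▸ h))
  refine ⟨c, fun v => ?_⟩
  simp [← hc, dotProduct]

section Dirac

variable {N : ℕ}

def diracPairing : LinearMap.BilinForm ℝ ((Fin N → ℝ) × (Fin N → ℝ)) :=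
  LinearMap.mk₂ ℝ (fun p q => q.1 ⬝ᵥ p.2 + p.1 ⬝ᵥ q.2)
    (fun _ _ _ => by
      simp only [Prod.fst_add, Prod.snd_add, dotProduct_add, add_dotProduct]; ring)
    (fun _ _ _ => by
      simp only [Prod.smul_fst, Prod.smul_snd, dotProduct_smul, smul_dotProduct, smul_eq_mul]; ring)
    (fun _ _ _ => by
      simp only [Prod.fst_add, Prod.snd_add, dotProduct_add, add_dotProduct]; ring)
    (fun _ _ _ => by
      simp only [Prod.smul_fst, Prod.smul_snd, dotProduct_smul, smul_dotProduct, smul_eq_mul]; ring)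

theorem diracPairing_apply (p q : (Fin N → ℝ) × (Fin N → ℝ)) :
    diracPairing p q = q.1 ⬝ᵥ p.2 + p.1 ⬝ᵥ q.2 := rfl

theorem diracPairing_add_fst (f g e : Fin N → ℝ) (q : (Fin N → ℝ) × (Fin N → ℝ)) :
    diracPairing (f + g, e) q = diracPairing (f, e) q + g ⬝ᵥ q.2 := by
  simp only [diracPairing_apply, add_dotProduct]; ring

def constrainedDirac {ℓ : ℕ} (D : Set ((Fin N → ℝ) × (Fin N → ℝ)))
    (E : Matrix (Fin ℓ) (Fin N) ℝ) : Set ((Fin N → ℝ) × (Fin N → ℝ)) :=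
  {p | E *ᵥ p.2 = 0 ∧ ∃ μ : Fin ℓ → ℝ, (p.1 + Eᵀ *ᵥ μ, p.2) ∈ D}

theorem diracPairing_add_transpose_mulVec {ℓ : ℕ} {E : Matrix (Fin ℓ) (Fin N) ℝ}
    {f e g d : Fin N → ℝ} (he : E *ᵥ e = 0) (hd : E *ᵥ d = 0) (μ ν : Fin ℓ → ℝ) :
    diracPairing (f + Eᵀ *ᵥ μ, e) (g + Eᵀ *ᵥ ν, d) = diracPairing (f, e) (g, d) := by
  simp only [diracPairing_apply, add_dotProduct, dotProduct_comm (Eᵀ *ᵥ μ),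
    dotProduct_comm (Eᵀ *ᵥ ν), dotProduct_transpose_mulVec, he, hd, dotProduct_zero, add_zero]

namespace IsDirac

variable {D : Set ((Fin N → ℝ) × (Fin N → ℝ))}

theorem mem_iff (hD : IsDirac D) {p : (Fin N → ℝ) × (Fin N → ℝ)} :
    p ∈ D ↔ ∀ q ∈ D, diracPairing p q = 0 := hD p

def toSubmodule (hD : IsDirac D) : Submodule ℝ ((Fin N → ℝ) × (Fin N → ℝ)) where
  carrier := D
  zero_mem' := hD.mem_iff.2 fun q _ => by simp
  add_mem' ha hb := hD.mem_iff.2 fun q hq => by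
    rw [map_add, LinearMap.add_apply, hD.mem_iff.1 ha q hq, hD.mem_iff.1 hb q hq, add_zero]
  smul_mem' c a ha := hD.mem_iff.2 fun q hq => by
    rw [map_smul, LinearMap.smul_apply, hD.mem_iff.1 ha q hq, smul_zero]

variable {ℓ : ℕ} {E : Matrix (Fin ℓ) (Fin N) ℝ} {p : (Fin N → ℝ) × (Fin N → ℝ)}

theorem pairing_eq_zero_of_mem_constrained (hD : IsDirac D) (hp : p ∈ constrainedDirac D E)
    {q : (Fin N → ℝ) × (Fin N → ℝ)} (hq : q ∈ constrainedDirac D E) : diracPairing p q = 0 := by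
  obtain ⟨hpE, μ, hpD⟩ := hp
  obtain ⟨hqE, ν, hqD⟩ := hq
  rw [← diracPairing_add_transpose_mulVec hpE hqE μ ν]
  exact hD.mem_iff.1 hpD _ hqD

theorem mulVec_eq_zero_of_forall_pairing (hD : IsDirac D)
    (hp : ∀ q ∈ constrainedDirac D E, diracPairing p q = 0) : E *ᵥ p.2 = 0 := by
  set μ := E *ᵥ p.2
  have hmem : (Eᵀ *ᵥ μ, 0) ∈ constrainedDirac D E := by
    refine ⟨mulVec_zero E, -μ, ?_⟩
    rw [mulVec_neg, add_neg_cancel]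
    exact hD.toSubmodule.zero_mem
  have := hp _ hmem
  rw [diracPairing_apply, dotProduct_comm, dotProduct_transpose_mulVec, dotProduct_zero,
    add_zero] at this
  exact dotProduct_self_eq_zero.1 this

theorem exists_mem_of_forall_pairing (hD : IsDirac D)
    (hp : ∀ q ∈ constrainedDirac D E, diracPairing p q = 0) :
    ∃ μ : Fin ℓ → ℝ, (p.1 + Eᵀ *ᵥ μ, p.2) ∈ D := by
  let A := E.mulVecLin ∘ₗ LinearMap.snd ℝ _ _ ∘ₗ hD.toSubmodule.subtype
  let φ := diracPairing p ∘ₗ hD.toSubmodule.subtype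
  have hker : ker A ≤ ker φ := fun q hq =>
    hp q ⟨hq, 0, by rw [mulVec_zero, add_zero]; exact q.2⟩
  obtain ⟨c, hc⟩ := exists_dotProduct_eq_of_ker_le_ker hker
  refine ⟨-c, hD.mem_iff.2 fun q hq => ?_⟩
  rw [diracPairing_add_fst, mulVec_neg, neg_dotProduct, dotProduct_comm,
    dotProduct_transpose_mulVec]
  exact sub_eq_zero.2 (hc ⟨q, hq⟩)

end IsDirac

end Dirac

/-- If `D ⊆ ℝ^n × ℝ^n` is a Dirac structure and `E ∈ ℝ^{ℓ×n}`, then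
`D̃ = {(f,e) : E e = 0 and (f + Eᵀμ, e) ∈ D for some μ}` is again a Dirac structure. -/
theorem constrained_isDirac {n ℓ : ℕ}
    (D : Set ((Fin n → ℝ) × (Fin n → ℝ))) (hD : IsDirac D)
    (E : Matrix (Fin ℓ) (Fin n) ℝ) :
    IsDirac {p : (Fin n → ℝ) × (Fin n → ℝ) |
      E *ᵥ p.2 = 0 ∧ ∃ μ : Fin ℓ → ℝ, (p.1 + Eᵀ *ᵥ μ, p.2) ∈ D} := fun _ =>
  ⟨fun hp _ hq => hD.pairing_eq_zero_of_mem_constrained hp hq,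
    fun hp => ⟨hD.mulVec_eq_zero_of_forall_pairing hp, hD.exists_mem_of_forall_pairing hp⟩⟩
end

section
/- Let U ⊆ ℝ^k be open, let (D_x)_{x∈U} be a modulated Dirac structure with D_x ⊆ ℝ^n × ℝ^n for all x ∈ U, and let E : U → ℝ^{ℓ×n} be continuous. Assume that the dimension of the subspace D_x ∩ (ℝ^n × ker E(x)) is independent of x ∈ U. For x ∈ U define D̃_x := {(f,e) ∈ ℝ^n × ℝ^n : E(x) e = 0 and there exists μ ∈ ℝ^ℓ with (f + E(x)ᵀμ, e) ∈ D_x}. Then the family (D̃_x)_{x∈U} is a modulated Dirac structure. -/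
open Matrix

/-!
For the form `⟪(f, e), (f', e')⟫ = f ⬝ e' + f' ⬝ e`, a Dirac structure is a subspace equal to its
own orthogonal. With `F = {(Eᵀ μ, 0)}` and `K = ℝⁿ × ker E` one has `Fᗮ = K`, and
`D̃ = (D + F) ∩ K`, so `D̃ᗮ = (D ∩ K) + F`, which is `D̃` again by the modular law (`F ≤ K`).

For continuity, compose the given frame `T y` of `D y` with `E y` on the effort side: the
kernel of the resulting matrix `M y` is mapped by `T y` onto `D y ∩ K y`, so it has constant
dimension. If the columns of `W` span `ker (M x₀)`, then `H y = (M y)ᵀ M y + W Wᵀ` is invertible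
near `x₀` and `ker (M y) = range ((H y)⁻¹ W Wᵀ)`, which gives continuous spanning vectors of
`ker (M y)`. Their images under `T y`, together with the rows of `E y`, span `D̃ y`, which has
constant dimension `n`; writing a basis of `D̃ x₀` in this family and keeping the coefficients
gives nearby vectors that stay independent, since independence is an open condition.
-/

open Module Set

section LocalFrame

variable {X V W : Type*} [TopologicalSpace X] [TopologicalSpace V] [AddCommGroup V] [Module ℝ V]
  [AddCommGroup W] [Module ℝ W]

variable (W) in
/-- The local condition in the second clause of `IsModulatedDirac`. -/
def HasContinuousFrameNear (U : Set X) (S : X → Set V) (x : X) : Prop :=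
  ∃ Ux : Set X, IsOpen Ux ∧ x ∈ Ux ∧ Ux ⊆ U ∧
    ∃ T : X → (W →ₗ[ℝ] V),
      (∀ y ∈ Ux, Function.Injective (T y) ∧ Set.range (T y) = S y) ∧
      ∀ z : W, ContinuousOn (fun y => T y z) Ux

lemma HasContinuousFrameNear.mono {O U : Set X} {S : X → Set V} {x : X}
    (h : HasContinuousFrameNear W O S x) (hOU : O ⊆ U) : HasContinuousFrameNear W U S x := by
  obtain ⟨Ux, hUx, hx, hUxO, T⟩ := h
  exact ⟨Ux, hUx, hx, hUxO.trans hOU, T⟩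

end LocalFrame

section ContinuousFrame

variable {X V : Type*} [TopologicalSpace X] [NormedAddCommGroup V] [NormedSpace ℝ V]

lemma ContinuousOn.linearMap_apply {ι : Type*} [Fintype ι] [DecidableEq ι]
    {T : X → (ι → ℝ) →ₗ[ℝ] V} {w : X → ι → ℝ} {O : Set X}
    (hT : ∀ z, ContinuousOn (fun y => T y z) O) (hw : ContinuousOn w O) :
    ContinuousOn (fun y => T y (w y)) O := by
  have h : ContinuousOn (fun y => ∑ i, w y i • T y (fun j => if i = j then 1 else 0)) O :=
    continuousOn_finsetSum _ fun i _ => ((continuous_apply i).comp_continuousOn hw).smul (hT _)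
  exact h.congr fun y _ => LinearMap.pi_apply_eq_sum_univ (T y) (w y)

lemma ContinuousOn.linearMap_toMatrix' {ι κ : Type*} [Fintype ι] [DecidableEq ι]
    {A : X → (ι → ℝ) →ₗ[ℝ] (κ → ℝ)} {O : Set X} (hA : ∀ z, ContinuousOn (fun y => A y z) O) :
    ContinuousOn (fun y => LinearMap.toMatrix' (A y)) O :=
  continuousOn_pi.mpr fun i => continuousOn_pi.mpr fun j => by
    simp only [LinearMap.toMatrix'_apply]
    exact (continuous_apply i).comp_continuousOn (hA _)

lemma hasContinuousFrameNear_of_span [FiniteDimensional ℝ V] {ι : Type*} [Fintype ι]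
    {O : Set X} (hO : IsOpen O) {x₀ : X} (hx₀ : x₀ ∈ O) {S : X → Submodule ℝ V} {d : ℕ}
    (hS : ∀ y ∈ O, finrank ℝ (S y) = d) (v : ι → X → V) (hv : ∀ i, ContinuousOn (v i) O)
    (hspan : ∀ y ∈ O, Submodule.span ℝ (range fun i => v i y) = S y) :
    HasContinuousFrameNear (Fin d → ℝ) O (fun y => (S y : Set V)) x₀ := by
  let b := finBasisOfFinrankEq ℝ (S x₀) (hS x₀ hx₀)
  have hb : ∀ j, ∃ c : ι → ℝ, ∑ i, c i • v i x₀ = b j := fun j => by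
    rw [← Submodule.mem_span_range_iff_exists_fun, hspan x₀ hx₀]; exact (b j).2
  choose c hc using hb
  -- the basis of `S x₀` is extended to nearby points through its coefficients in the family `v`
  let u : X → Fin d → V := fun y j => ∑ i, c j i • v i y
  have hu : ContinuousOn u O := continuousOn_pi.mpr fun j =>
    continuousOn_finsetSum _ fun i _ => (hv i).const_smul _
  have huS : ∀ y ∈ O, ∀ j, u y j ∈ S y := fun y hy j =>
    Submodule.sum_mem _ fun i _ => Submodule.smul_mem _ _
      (hspan y hy ▸ Submodule.subset_span (mem_range_self i))
  have hu₀ : LinearIndependent ℝ (u x₀) := by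
    have : u x₀ = (S x₀).subtype ∘ b := funext hc
    rw [this]
    exact b.linearIndependent.map' _ (S x₀).ker_subtype
  refine ⟨O ∩ u ⁻¹' {f | LinearIndependent ℝ f},
    hu.isOpen_inter_preimage hO isOpen_setOfPred_linearIndependent, ⟨hx₀, hu₀⟩,
    inter_subset_left, fun y => Fintype.linearCombination ℝ (u y), fun y ⟨hyO, hy⟩ => ?_,
    fun z => ?_⟩
  · have hinj := linearIndependent_iff_injective_fintypeLinearCombination.mp hy
    refine ⟨hinj, ?_⟩
    rw [← LinearMap.coe_range, Fintype.range_linearCombination]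
    congr 1
    refine Submodule.eq_of_le_of_finrank_eq (Submodule.span_le.mpr ?_) ?_
    · rintro _ ⟨j, rfl⟩; exact huS y hyO j
    · rw [← Fintype.range_linearCombination, LinearMap.finrank_range_of_inj hinj,
        finrank_fin_fun, hS y hyO]
  · simp only [Fintype.linearCombination_apply]
    exact continuousOn_finsetSum _ fun j _ =>
      ((continuous_apply j).comp_continuousOn (hu.mono inter_subset_left)).const_smul _

end ContinuousFrame

section KernelFrame

variable {X : Type*} [TopologicalSpace X] {l m : Type*} [Fintype l] [Fintype m] [DecidableEq m]

lemma det_transpose_mul_self_add_mul_transpose_ne_zero {r : Type*} [Fintype r]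
    (M : Matrix l m ℝ) (W : Matrix m r ℝ)
    (hMW : LinearMap.ker M.mulVecLin ≤ LinearMap.range W.mulVecLin) :
    (Mᵀ * M + W * Wᵀ).det ≠ 0 := by
  intro hdet
  obtain ⟨z, hz0, hz⟩ := exists_mulVec_eq_zero_iff.mpr hdet
  -- `Mᵀ * M + W * Wᵀ = Gᵀ * G` for the stacked matrix `G = [M; Wᵀ]`
  have hG : z ∈ LinearMap.ker (fromRows M Wᵀ).mulVecLin := by
    rw [← ker_mulVecLin_transpose_mul_self, LinearMap.mem_ker, mulVecLin_apply,
      transpose_fromRows, fromCols_mul_fromRows, transpose_transpose, hz]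
  rw [LinearMap.mem_ker, mulVecLin_apply, fromRows_mulVec] at hG
  have hMz : M *ᵥ z = 0 := funext fun i => congrFun hG (Sum.inl i)
  have hWz : Wᵀ *ᵥ z = 0 := funext fun i => congrFun hG (Sum.inr i)
  obtain ⟨a, ha : W *ᵥ a = z⟩ := hMW hMz
  apply hz0
  rw [← dotProduct_self_eq_zero]
  nth_rw 1 [← ha]
  rw [← vecMul_transpose, ← dotProduct_mulVec, hWz, dotProduct_zero]

lemma ker_mulVecLin_eq_range_inv_mul (M : Matrix l m ℝ) (P : Matrix m m ℝ)
    (hdet : (Mᵀ * M + P).det ≠ 0) (hrank : P.rank ≤ finrank ℝ (LinearMap.ker M.mulVecLin)) :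
    LinearMap.ker M.mulVecLin = LinearMap.range ((Mᵀ * M + P)⁻¹ * P).mulVecLin := by
  refine Submodule.eq_of_le_of_finrank_le (fun z hz => ⟨z, ?_⟩)
    ((rank_mul_le_right _ _).trans hrank)
  replace hz : M *ᵥ z = 0 := hz
  have hHz : (Mᵀ * M + P) *ᵥ z = P *ᵥ z := by
    rw [add_mulVec, ← mulVec_mulVec, hz, mulVec_zero, zero_add]
  change ((Mᵀ * M + P)⁻¹ * P) *ᵥ z = z
  rw [← mulVec_mulVec, ← hHz, mulVec_mulVec, nonsing_inv_mul _ (isUnit_iff_ne_zero.mpr hdet),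
    one_mulVec]

lemma ContinuousOn.matrix_inv_s10 {A : X → Matrix m m ℝ} {O : Set X} (hA : ContinuousOn A O)
    (hdet : ∀ y ∈ O, (A y).det ≠ 0) : ContinuousOn (fun y => (A y)⁻¹) O := by
  intro y hy
  have h : ContinuousAt Ring.inverse (A y).det := by
    rw [Ring.inverse_eq_inv']; exact continuousAt_inv₀ (hdet y hy)
  exact (continuousAt_matrix_inv (A y) h).comp_continuousWithinAt (hA y hy)

lemma exists_continuousOn_span_eq_ker {M : X → Matrix l m ℝ} {O : Set X} (hO : IsOpen O)
    {x₀ : X} (hx₀ : x₀ ∈ O) (hM : ContinuousOn M O)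
    (hker : ∀ y ∈ O, finrank ℝ (LinearMap.ker (M y).mulVecLin) =
      finrank ℝ (LinearMap.ker (M x₀).mulVecLin)) :
    ∃ O' ⊆ O, IsOpen O' ∧ x₀ ∈ O' ∧ ∃ w : m → X → (m → ℝ), (∀ j, ContinuousOn (w j) O') ∧
      ∀ y ∈ O', Submodule.span ℝ (range fun j => w j y) = LinearMap.ker (M y).mulVecLin := by
  let b := finBasis ℝ (LinearMap.ker (M x₀).mulVecLin)
  let W : Matrix m (Fin (finrank ℝ (LinearMap.ker (M x₀).mulVecLin))) ℝ :=
    of fun i j => (b j : m → ℝ) i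
  have hW : LinearMap.ker (M x₀).mulVecLin ≤ LinearMap.range W.mulVecLin := by
    rw [range_mulVecLin, show W.col = Submodule.subtype _ ∘ b from rfl, range_comp,
      Submodule.span_image, b.span_eq, Submodule.map_top, Submodule.range_subtype]
  let H : X → Matrix m m ℝ := fun y => (M y)ᵀ * M y + W * Wᵀ
  have hH : ContinuousOn H O := continuousOn_iff_continuous_domRestrict.mpr
    ((hM.domRestrict.matrix_transpose.matrix_mul hM.domRestrict).add continuous_const)
  let O' := O ∩ (fun y => (H y).det) ⁻¹' {0}ᶜ
  have hO'det : ∀ y ∈ O', (H y).det ≠ 0 := fun y hy => hy.2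
  refine ⟨O', inter_subset_left,
    (continuous_id.matrix_det.comp_continuousOn hH).isOpen_inter_preimage hO isOpen_compl_singleton,
    ⟨hx₀, det_transpose_mul_self_add_mul_transpose_ne_zero _ _ hW⟩,
    fun j y => ((H y)⁻¹ * (W * Wᵀ)).col j, fun j => ?_, fun y hy => ?_⟩
  · have hHinv := continuousOn_iff_continuous_domRestrict.mp
      ((hH.mono inter_subset_left).matrix_inv_s10 hO'det)
    exact continuousOn_iff_continuous_domRestrict.mpr
      ((continuous_apply j).comp (hHinv.matrix_mul continuous_const).matrix_transpose)
  · rw [← range_mulVecLin]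
    refine (ker_mulVecLin_eq_range_inv_mul _ _ (hO'det y hy) ?_).symm
    calc (W * Wᵀ).rank ≤ W.rank := rank_mul_le_left _ _
      _ ≤ _ := (rank_le_card_width W).trans_eq (Fintype.card_fin _)
      _ = _ := (hker y hy.1).symm

end KernelFrame

section Orthogonal

variable {K V : Type*} [Field K] [AddCommGroup V] [Module K V] (B : LinearMap.BilinForm K V)

lemma LinearMap.BilinForm.orthogonal_sup (A C : Submodule K V) :
    B.orthogonal (A ⊔ C) = B.orthogonal A ⊓ B.orthogonal C := by
  ext p
  refine ⟨fun h => ⟨fun q hq => h q (Submodule.mem_sup_left hq),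
    fun q hq => h q (Submodule.mem_sup_right hq)⟩, fun ⟨hA, hC⟩ q hq => ?_⟩
  obtain ⟨a, ha, c, hc, rfl⟩ := Submodule.mem_sup.mp hq
  simp only [map_add, LinearMap.add_apply, hA a ha, hC c hc, add_zero]

variable [FiniteDimensional K V] {B}

lemma LinearMap.BilinForm.orthogonal_inf (hB : B.Nondegenerate) (hB₀ : B.IsRefl)
    (A C : Submodule K V) : B.orthogonal (A ⊓ C) = B.orthogonal A ⊔ B.orthogonal C := by
  rw [← B.orthogonal_orthogonal hB hB₀ (B.orthogonal A ⊔ B.orthogonal C), B.orthogonal_sup,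
    B.orthogonal_orthogonal hB hB₀, B.orthogonal_orthogonal hB hB₀]

end Orthogonal

namespace DiracStructure

variable {n ℓ : ℕ}

abbrev BondSpace (n : ℕ) := (Fin n → ℝ) × (Fin n → ℝ)

def pairing (n : ℕ) : LinearMap.BilinForm ℝ (BondSpace n) :=
  LinearMap.mk₂ ℝ (fun p q => p.1 ⬝ᵥ q.2 + q.1 ⬝ᵥ p.2)
    (fun _ _ _ => by
      simp only [Prod.fst_add, Prod.snd_add, add_dotProduct, dotProduct_add]; ring)
    (fun _ _ _ => by
      simp only [Prod.smul_fst, Prod.smul_snd, smul_dotProduct, dotProduct_smul, smul_eq_mul]; ring)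
    (fun _ _ _ => by
      simp only [Prod.fst_add, Prod.snd_add, add_dotProduct, dotProduct_add]; ring)
    (fun _ _ _ => by
      simp only [Prod.smul_fst, Prod.smul_snd, smul_dotProduct, dotProduct_smul, smul_eq_mul]; ring)

lemma pairing_apply (p q : BondSpace n) : pairing n p q = p.1 ⬝ᵥ q.2 + q.1 ⬝ᵥ p.2 := rfl

lemma pairing_isRefl : (pairing n).IsRefl := fun p q h => by
  rwa [pairing_apply, add_comm] at h

lemma pairing_nondegenerate : (pairing n).Nondegenerate := by
  refine (LinearMap.IsRefl.nondegenerate_iff_separatingLeft pairing_isRefl).mpr fun p hp => ?_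
  have h₁ := hp (0, p.1)
  have h₂ := hp (p.2, 0)
  simp only [pairing_apply, zero_dotProduct, dotProduct_zero, add_zero, zero_add,
    dotProduct_self_eq_zero] at h₁ h₂
  exact Prod.ext h₁ h₂

lemma isDiracPair_iff (S : Submodule ℝ (BondSpace n)) :
    IsDiracPair (fun f e : Fin n → ℝ => f ⬝ᵥ e) (S : Set (BondSpace n)) ↔
      (pairing n).orthogonal S = S := by
  simp only [IsDiracPair, SetLike.ext_iff, LinearMap.BilinForm.mem_orthogonal_iff, pairing_apply,
    SetLike.mem_coe]
  exact forall_congr' fun p => Iff.comm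

lemma finrank_eq_of_orthogonal_eq {S : Submodule ℝ (BondSpace n)}
    (hS : (pairing n).orthogonal S = S) : finrank ℝ S = n := by
  have h := LinearMap.BilinForm.finrank_orthogonal pairing_nondegenerate S
  rw [hS, finrank_prod, finrank_fin_fun] at h
  omega

def effortKer (E : Matrix (Fin ℓ) (Fin n) ℝ) : Submodule ℝ (BondSpace n) :=
  LinearMap.ker (E.mulVecLin ∘ₗ LinearMap.snd ℝ _ _)

def forceRange (E : Matrix (Fin ℓ) (Fin n) ℝ) : Submodule ℝ (BondSpace n) :=
  LinearMap.range (LinearMap.inl ℝ _ _ ∘ₗ Eᵀ.mulVecLin)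

def constrain (D : Submodule ℝ (BondSpace n)) (E : Matrix (Fin ℓ) (Fin n) ℝ) :
    Submodule ℝ (BondSpace n) :=
  (D ⊔ forceRange E) ⊓ effortKer E

section

variable (E : Matrix (Fin ℓ) (Fin n) ℝ)

lemma mem_effortKer {p : BondSpace n} : p ∈ effortKer E ↔ E *ᵥ p.2 = 0 := Iff.rfl

lemma mem_forceRange {p : BondSpace n} : p ∈ forceRange E ↔ ∃ μ, (Eᵀ *ᵥ μ, 0) = p := Iff.rfl

lemma forceRange_le_effortKer : forceRange E ≤ effortKer E := by
  rintro _ ⟨μ, rfl⟩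
  exact mulVec_zero E

lemma span_rows_eq_forceRange :
    Submodule.span ℝ (range fun i => ((E i, 0) : BondSpace n)) = forceRange E := by
  rw [forceRange, LinearMap.range_comp, range_mulVecLin, ← Submodule.span_image, ← range_comp]
  rfl

lemma orthogonal_forceRange : (pairing n).orthogonal (forceRange E) = effortKer E := by
  ext p
  simp only [LinearMap.BilinForm.mem_orthogonal_iff, mem_forceRange,
    mem_effortKer, forall_exists_index, forall_apply_eq_imp_iff, pairing_apply, dotProduct_zero,
    add_zero, mulVec_transpose, ← dotProduct_mulVec, dotProduct_comm _ (E *ᵥ p.2)]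
  exact dotProduct_eq_zero_iff

lemma orthogonal_effortKer : (pairing n).orthogonal (effortKer E) = forceRange E := by
  rw [← orthogonal_forceRange,
    LinearMap.BilinForm.orthogonal_orthogonal pairing_nondegenerate pairing_isRefl]

lemma constrain_eq_sup (D : Submodule ℝ (BondSpace n)) :
    constrain D E = D ⊓ effortKer E ⊔ forceRange E := by
  rw [constrain, sup_comm D, sup_inf_assoc_of_le _ (forceRange_le_effortKer E), sup_comm]

lemma coe_constrain (D : Submodule ℝ (BondSpace n)) :
    (constrain D E : Set (BondSpace n)) =
      {p | E *ᵥ p.2 = 0 ∧ ∃ μ : Fin ℓ → ℝ, (p.1 + Eᵀ *ᵥ μ, p.2) ∈ D} := by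
  ext p
  simp only [constrain, SetLike.mem_coe, Submodule.mem_inf, Submodule.mem_sup, mem_forceRange,
    mem_effortKer, mem_ofPred_eq, and_comm (b := E *ᵥ p.2 = 0)]
  refine and_congr_right fun _ => ⟨?_, fun ⟨μ, hμ⟩ => ⟨_, hμ, _, ⟨-μ, rfl⟩, ?_⟩⟩
  · rintro ⟨d, hd, _, ⟨μ, rfl⟩, rfl⟩
    exact ⟨-μ, by simpa [mulVec_neg] using hd⟩
  · ext <;> simp [mulVec_neg]

lemma orthogonal_constrain {D : Submodule ℝ (BondSpace n)} (hD : (pairing n).orthogonal D = D) :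
    (pairing n).orthogonal (constrain D E) = constrain D E := by
  conv_lhs => rw [constrain, LinearMap.BilinForm.orthogonal_inf pairing_nondegenerate
    pairing_isRefl, LinearMap.BilinForm.orthogonal_sup, orthogonal_forceRange, orthogonal_effortKer,
    hD]
  exact (constrain_eq_sup E D).symm

end

lemma hasContinuousFrameNear_constrain {X ι : Type*} [TopologicalSpace X] [Fintype ι]
    [DecidableEq ι] {O : Set X} (hO : IsOpen O) {x₀ : X} (hx₀ : x₀ ∈ O)
    {D : X → Submodule ℝ (BondSpace n)} {E : X → Matrix (Fin ℓ) (Fin n) ℝ}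
    (hE : ContinuousOn E O) (hD : ∀ y ∈ O, (pairing n).orthogonal (D y) = D y)
    (hdim : ∀ y ∈ O, finrank ℝ ↥(D y ⊓ effortKer (E y)) = finrank ℝ ↥(D x₀ ⊓ effortKer (E x₀)))
    (T : X → (ι → ℝ) →ₗ[ℝ] BondSpace n)
    (hT : ∀ y ∈ O, Function.Injective (T y) ∧ range (T y) = D y)
    (hTc : ∀ z, ContinuousOn (fun y => T y z) O) :
    HasContinuousFrameNear (Fin n → ℝ) O (fun y => (constrain (D y) (E y) : Set (BondSpace n)))
      x₀ := by
  let M : X → Matrix (Fin ℓ) ι ℝ := fun y => E y * LinearMap.toMatrix' (LinearMap.snd ℝ _ _ ∘ₗ T y)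
  have hmap : ∀ y ∈ O, (LinearMap.ker (M y).mulVecLin).map (T y) = D y ⊓ effortKer (E y) := by
    intro y hy
    have hcomap : LinearMap.ker (M y).mulVecLin = (effortKer (E y)).comap (T y) := by
      ext z
      simp [M, effortKer, LinearMap.toMatrix'_mulVec]
    have hrange : LinearMap.range (T y) = D y :=
      SetLike.coe_injective ((LinearMap.coe_range _).trans (hT y hy).2)
    rw [hcomap, Submodule.map_comap_eq, hrange]
  have hN : ContinuousOn (fun y => LinearMap.toMatrix' (LinearMap.snd ℝ _ _ ∘ₗ T y)) O :=
    ContinuousOn.linearMap_toMatrix' fun z => continuous_snd.comp_continuousOn (hTc z)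
  have hM : ContinuousOn M O :=
    continuousOn_iff_continuous_domRestrict.mpr (hE.domRestrict.matrix_mul hN.domRestrict)
  have hker : ∀ y ∈ O, finrank ℝ (LinearMap.ker (M y).mulVecLin) =
      finrank ℝ (LinearMap.ker (M x₀).mulVecLin) := by
    intro y hy
    rw [(Submodule.equivMapOfInjective _ (hT y hy).1 _).finrank_eq,
      (Submodule.equivMapOfInjective _ (hT x₀ hx₀).1 _).finrank_eq, hmap y hy, hmap x₀ hx₀,
      hdim y hy]
  obtain ⟨O', hO'O, hO', hx₀O', w, hw, hspan⟩ := exists_continuousOn_span_eq_ker hO hx₀ hM hker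
  let v : ι ⊕ Fin ℓ → X → BondSpace n := fun i y =>
    Sum.elim (fun j => T y (w j y)) (fun i => ((E y i, 0) : BondSpace n)) i
  refine HasContinuousFrameNear.mono ?_ hO'O
  refine hasContinuousFrameNear_of_span hO' hx₀O' (S := fun y => constrain (D y) (E y))
    (fun y hy => finrank_eq_of_orthogonal_eq (orthogonal_constrain _ (hD y (hO'O hy)))) v ?_ ?_
  · rintro (j | i)
    · exact ContinuousOn.linearMap_apply (fun z => (hTc z).mono hO'O) (hw j)
    · exact ((continuous_apply i).comp_continuousOn (hE.mono hO'O)).prodMk continuousOn_const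
  · intro y hy
    have hTw : range (fun j => T y (w j y)) = T y '' range fun j => w j y := range_comp _ _
    rw [Sum.elim_range, Submodule.span_union, span_rows_eq_forceRange, constrain_eq_sup, hTw,
      Submodule.span_image, hspan y hy, hmap y (hO'O hy)]

end DiracStructure

open DiracStructure in
theorem constrained_isModulatedDirac_general {k n ℓ : ℕ}
    (U : Set (Fin k → ℝ))
    (D : (Fin k → ℝ) → Submodule ℝ ((Fin n → ℝ) × (Fin n → ℝ)))
    (hD : IsModulatedDirac (Fin n → ℝ) (fun f e : Fin n → ℝ => f ⬝ᵥ e) U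
      (fun x => ((D x : Submodule ℝ ((Fin n → ℝ) × (Fin n → ℝ))) : Set ((Fin n → ℝ) × (Fin n → ℝ)))))
    (E : (Fin k → ℝ) → Matrix (Fin ℓ) (Fin n) ℝ)
    (hE : ContinuousOn E U)
    (hdim : ∀ x ∈ U, ∀ y ∈ U,
      Module.finrank ℝ
        ↥(D x ⊓ LinearMap.ker ((E x).mulVecLin ∘ₗ LinearMap.snd ℝ (Fin n → ℝ) (Fin n → ℝ))) =
      Module.finrank ℝ
        ↥(D y ⊓ LinearMap.ker ((E y).mulVecLin ∘ₗ LinearMap.snd ℝ (Fin n → ℝ) (Fin n → ℝ)))) :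
    IsModulatedDirac (Fin n → ℝ) (fun f e : Fin n → ℝ => f ⬝ᵥ e) U
      (fun x => {p : (Fin n → ℝ) × (Fin n → ℝ) |
        E x *ᵥ p.2 = 0 ∧ ∃ μ : Fin ℓ → ℝ, (p.1 + (E x)ᵀ *ᵥ μ, p.2) ∈ D x}) := by
  have hDirac : ∀ x ∈ U, (pairing n).orthogonal (D x) = D x := fun x hx =>
    (isDiracPair_iff _).mp (hD.1 x hx)
  simp_rw [← coe_constrain]
  refine ⟨fun x hx => (isDiracPair_iff _).mpr (orthogonal_constrain _ (hDirac x hx)),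
    fun x₀ hx₀ => ?_⟩
  obtain ⟨Ux, hUx, hx₀Ux, hUxU, T, hT, hTc⟩ := hD.2 x₀ hx₀
  exact (hasContinuousFrameNear_constrain hUx hx₀Ux (hE.mono hUxU) (fun y hy => hDirac y (hUxU hy))
    (fun y hy => hdim y (hUxU hy) x₀ hx₀) T hT hTc).mono hUxU

/-- Incorporating the additional constraint `E(x) e = 0` (with forces `E(x)ᵀ μ`) into a
modulated Dirac structure `(D x)_{x ∈ U}` yields again a modulated Dirac structure, provided
`E` is continuous and the dimension of `D x ∩ (ℝ^n × ker E(x))` does not depend on `x ∈ U`. -/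
theorem constrained_isModulatedDirac {k n ℓ : ℕ}
    (U : Set (Fin k → ℝ)) (hU : IsOpen U)
    (D : (Fin k → ℝ) → Submodule ℝ ((Fin n → ℝ) × (Fin n → ℝ)))
    (hD : IsModulatedDirac (Fin n → ℝ) (fun f e : Fin n → ℝ => f ⬝ᵥ e) U
      (fun x => ((D x : Submodule ℝ ((Fin n → ℝ) × (Fin n → ℝ))) : Set ((Fin n → ℝ) × (Fin n → ℝ)))))
    (E : (Fin k → ℝ) → Matrix (Fin ℓ) (Fin n) ℝ)
    (hE : ContinuousOn E U)
    (hdim : ∀ x ∈ U, ∀ y ∈ U,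
      Module.finrank ℝ
        ↥(D x ⊓ LinearMap.ker ((E x).mulVecLin ∘ₗ LinearMap.snd ℝ (Fin n → ℝ) (Fin n → ℝ))) =
      Module.finrank ℝ
        ↥(D y ⊓ LinearMap.ker ((E y).mulVecLin ∘ₗ LinearMap.snd ℝ (Fin n → ℝ) (Fin n → ℝ)))) :
    IsModulatedDirac (Fin n → ℝ) (fun f e : Fin n → ℝ => f ⬝ᵥ e) U
      (fun x => {p : (Fin n → ℝ) × (Fin n → ℝ) |
        E x *ᵥ p.2 = 0 ∧ ∃ μ : Fin ℓ → ℝ, (p.1 + (E x)ᵀ *ᵥ μ, p.2) ∈ D x}) :=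
  constrained_isModulatedDirac_general U D hD E hE hdim
end

section
/- Let D := {((a,0),(0,b)) : a, b ∈ ℝ} ⊆ ℝ² × ℝ² and, for x ∈ ℝ, let E(x) := [1, x] ∈ ℝ^{1×2} and D̃_x := {(f,e) ∈ ℝ² × ℝ² : E(x) e = 0 and ∃ μ ∈ ℝ with (f + E(x)ᵀμ, e) ∈ D}. Then: (i) D̃_0 = D; (ii) D̃_x = ℝ² × {0} for every x ≠ 0; and (iii) for every neighborhood U₀ ⊆ ℝ of 0 and every family (T_y)_{y∈U₀} of injective linear maps T_y : ℝ² → ℝ² × ℝ² with range(T_y) = D̃_y, there exists z ∈ ℝ² such that the map y ↦ T_y z is not continuous at 0. In particular, (D̃_x)_{x∈ℝ} is not a modulated Dirac structure. -/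
open Matrix

/-- The constant Dirac structure `D = {((a,0),(0,b)) : a,b ∈ ℝ} ⊆ ℝ² × ℝ²`. -/
def D₀ : Set ((Fin 2 → ℝ) × (Fin 2 → ℝ)) :=
  {p | ∃ a b : ℝ, p = (![a, 0], ![0, b])}

/-- The matrix `E(x) = [1, x] ∈ ℝ^{1×2}`. -/
def Emat (x : ℝ) : Matrix (Fin 1) (Fin 2) ℝ := Matrix.of ![![1, x]]

/-- The constrained family `D̃_x = {(f,e) : E(x) e = 0, ∃ μ, (f + E(x)ᵀμ, e) ∈ D}`. -/
def Dtilde (x : ℝ) : Set ((Fin 2 → ℝ) × (Fin 2 → ℝ)) :=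
  {p | Emat x *ᵥ p.2 = 0 ∧ ∃ μ : Fin 1 → ℝ, (p.1 + (Emat x)ᵀ *ᵥ μ, p.2) ∈ D₀}

/-!
At `x = 0` the constraint `E(0) e = e₀ = 0` is already part of `D`, so `D̃₀ = D` contains
`(0, (0, 1))`, which has a nonzero effort. For `x ≠ 0` the constraint forces `e₁ = 0`, so every
element of `D̃ₓ` has zero effort. Hence for the preimage `z` of `(0, (0, 1))` under `T₀`, the
effort of `T_y z` vanishes on a punctured neighbourhood of `0` but not at `0`.
-/

open Filter Topology

lemma mem_D₀_iff {p : (Fin 2 → ℝ) × (Fin 2 → ℝ)} : p ∈ D₀ ↔ p.1 1 = 0 ∧ p.2 0 = 0 := by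
  constructor
  · rintro ⟨a, b, rfl⟩
    simp
  · rintro ⟨hf, he⟩
    refine ⟨p.1 0, p.2 1, Prod.ext ?_ ?_⟩ <;> ext i <;> fin_cases i <;> simp [hf, he]

lemma mem_Dtilde_iff {x : ℝ} {p : (Fin 2 → ℝ) × (Fin 2 → ℝ)} :
    p ∈ Dtilde x ↔ p.2 0 + x * p.2 1 = 0 ∧ (∃ μ : ℝ, p.1 1 + x * μ = 0) ∧ p.2 0 = 0 := by
  simp [Dtilde, mem_D₀_iff, Emat, Matrix.mulVec, dotProduct, funext_iff, Fin.sum_univ_two,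
    Fin.exists_fin_succ_pi]

lemma Dtilde_zero : Dtilde 0 = D₀ := by
  ext p
  simp [mem_Dtilde_iff, mem_D₀_iff]

lemma Dtilde_of_ne_zero {x : ℝ} (hx : x ≠ 0) :
    Dtilde x = {p : (Fin 2 → ℝ) × (Fin 2 → ℝ) | p.2 = 0} := by
  ext p
  have hμ : ∃ μ : ℝ, p.1 1 + x * μ = 0 := ⟨-p.1 1 / x, by field_simp; ring⟩
  simp only [mem_Dtilde_iff, hμ, Set.mem_ofPred_eq, funext_iff, Fin.forall_fin_two]
  constructor
  · rintro ⟨he, -, he₀⟩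
    exact ⟨he₀, by simpa [he₀, hx] using he⟩
  · rintro ⟨he₀, he₁⟩
    simp [he₀, he₁]

lemma not_continuousAt_of_eventuallyEq_nhdsNE {X Y : Type*} [TopologicalSpace X]
    [TopologicalSpace Y] [T2Space Y] {f : X → Y} {x : X} {c : Y} [(𝓝[≠] x).NeBot]
    (hf : f =ᶠ[𝓝[≠] x] fun _ => c) (hx : f x ≠ c) : ¬ ContinuousAt f x :=
  fun hc => hx ((hc.eventuallyEq_nhds_iff_eventuallyEq_nhdsNE continuousAt_const).1 hf).eq_of_nhds

lemma Dtilde.exists_not_continuousWithinAt {W : Type*} {U₀ : Set ℝ} (hU₀ : U₀ ∈ 𝓝 0)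
    {T : ℝ → W → (Fin 2 → ℝ) × (Fin 2 → ℝ)} (hT : ∀ y ∈ U₀, Set.range (T y) = Dtilde y) :
    ∃ z, ¬ ContinuousWithinAt (fun y => T y z) U₀ 0 := by
  obtain ⟨z, hz⟩ : (![0, 0], ![0, 1]) ∈ Set.range (T 0) := by
    rw [hT 0 (mem_of_mem_nhds hU₀), Dtilde_zero]
    exact ⟨0, 1, rfl⟩
  refine ⟨z, fun hc => ?_⟩
  rw [continuousWithinAt_iff_continuousAt hU₀] at hc
  refine not_continuousAt_of_eventuallyEq_nhdsNE (c := 0) ?_ (by simp [hz]) hc.snd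
  filter_upwards [mem_nhdsWithin_of_mem_nhds hU₀, self_mem_nhdsWithin] with y hy hy₀
  have hmem : T y z ∈ Dtilde y := hT y hy ▸ Set.mem_range_self z
  rwa [Dtilde_of_ne_zero hy₀] at hmem

/-- Counterexample: without the constant-dimension assumption, the constrained family
`(D̃_x)_{x∈ℝ}` fails to be a modulated Dirac structure: `D̃_0 = D`, `D̃_x = ℝ² × {0}` for
`x ≠ 0`, no local trivialization around `0` is continuous, and the family is not a
modulated Dirac structure. -/
theorem not_modulated_counterexample :
    Dtilde 0 = D₀ ∧
    (∀ x : ℝ, x ≠ 0 → Dtilde x = {p : (Fin 2 → ℝ) × (Fin 2 → ℝ) | p.2 = 0}) ∧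
    (∀ U₀ : Set ℝ, IsOpen U₀ → (0 : ℝ) ∈ U₀ →
      ∀ T : ℝ → ((Fin 2 → ℝ) →ₗ[ℝ] ((Fin 2 → ℝ) × (Fin 2 → ℝ))),
        (∀ y ∈ U₀, Function.Injective (T y) ∧ Set.range (T y) = Dtilde y) →
        ∃ z : Fin 2 → ℝ, ¬ ContinuousWithinAt (fun y => T y z) U₀ 0) ∧
    ¬ IsModulatedDirac (Fin 2 → ℝ) (fun f e : Fin 2 → ℝ => f ⬝ᵥ e)
        (Set.univ : Set ℝ) Dtilde := by
  refine ⟨Dtilde_zero, fun _ => Dtilde_of_ne_zero, fun U₀ hU₀ h₀ T hT =>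
    Dtilde.exists_not_continuousWithinAt (hU₀.mem_nhds h₀) fun y hy => (hT y hy).2, ?_⟩
  rintro ⟨-, hloc⟩
  obtain ⟨Ux, hUx, h₀, -, T, hT, hcont⟩ := hloc 0 (Set.mem_univ 0)
  obtain ⟨z, hz⟩ :=
    Dtilde.exists_not_continuousWithinAt (hUx.mem_nhds h₀) fun y hy => (hT y hy).2
  exact hz (hcont z 0 h₀)
end

section
/- Let U ⊆ ℝ^n be open, let H : U → ℝ and d : U → ℝ^k be twice continuously differentiable, assume the Jacobian d'(x) ∈ ℝ^{k×n} has full row rank k for all x ∈ U, and that {x ∈ U : d(x) = 0} is nonempty. Define L := {(x, ∇H(x) + d'(x)ᵀλ) : x ∈ U, d(x) = 0, λ ∈ ℝ^k} ⊆ ℝ^n × ℝ^n. Then for every z = (z₁,z₂) ∈ L, setting ẑ := (d'(z₁) d'(z₁)ᵀ)⁻¹ d'(z₁)(∇H(z₁) − z₂) ∈ ℝ^k and M(z) := ∇²H(z₁) − Σ_{l=1}^k ẑ_l ∇²d_l(z₁) ∈ ℝ^{n×n} (where ∇²H and ∇²d_l denote Hessians), the tangent space of L at z equals T_z L = {(v₁,v₂)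 ∈ ℝ^n × ℝ^n : d'(z₁) v₁ = 0 and v₂ − M(z) v₁ ∈ (ker d'(z₁))^⊥}. -/
open Matrix

/-- The gradient of `H : ℝ^n → ℝ`, given componentwise by the partial derivatives. -/
noncomputable def grad {n : ℕ} (H : (Fin n → ℝ) → ℝ) (x : Fin n → ℝ) : Fin n → ℝ :=
  fun i => fderiv ℝ H x (Pi.single i 1)

/-- The Jacobian matrix of `d : ℝ^n → ℝ^k`. -/
noncomputable def jac {n k : ℕ} (d : (Fin n → ℝ) → (Fin k → ℝ)) (x : Fin n → ℝ) :
    Matrix (Fin k) (Fin n) ℝ :=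
  Matrix.of fun j i => fderiv ℝ d x (Pi.single i 1) j

/-- The Hessian matrix of `H : ℝ^n → ℝ`. -/
noncomputable def hess {n : ℕ} (H : (Fin n → ℝ) → ℝ) (x : Fin n → ℝ) :
    Matrix (Fin n) (Fin n) ℝ :=
  Matrix.of fun i j =>
    fderiv ℝ (fun y => fderiv ℝ H y (Pi.single j 1)) x (Pi.single i 1)

/-- The tangent space of a set `S` at `z`: all velocities at `0` of continuously
differentiable curves `(−1,1) → S` passing through `z` at time `0`. -/
def TangentSet {V : Type*} [NormedAddCommGroup V] [NormedSpace ℝ V]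
    (S : Set V) (z : V) : Set V :=
  {v | ∃ x : ℝ → V, ContDiffOn ℝ 1 x (Set.Ioo (-1 : ℝ) 1) ∧
    (∀ t ∈ Set.Ioo (-1 : ℝ) 1, x t ∈ S) ∧ x 0 = z ∧
    derivWithin x (Set.Ioo (-1 : ℝ) 1) 0 = v}

/-- The Lagrange multiplier `ẑ = (d'(z₁)d'(z₁)ᵀ)⁻¹ d'(z₁)(∇H(z₁) − z₂)` associated with a
point `z = (z₁,z₂)`. -/
noncomputable def zhat {n k : ℕ} (H : (Fin n → ℝ) → ℝ) (d : (Fin n → ℝ) → (Fin k → ℝ))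
    (z : (Fin n → ℝ) × (Fin n → ℝ)) : Fin k → ℝ :=
  (jac d z.1 * (jac d z.1)ᵀ)⁻¹ *ᵥ (jac d z.1 *ᵥ (grad H z.1 - z.2))

/-- The symmetric matrix `M(z) = ∇²H(z₁) − Σ_l ẑ_l ∇²d_l(z₁)`. -/
noncomputable def Mmat {n k : ℕ} (H : (Fin n → ℝ) → ℝ) (d : (Fin n → ℝ) → (Fin k → ℝ))
    (z : (Fin n → ℝ) × (Fin n → ℝ)) : Matrix (Fin n) (Fin n) ℝ :=
  hess H z.1 - ∑ l : Fin k, zhat H d z l • hess (fun y => d y l) z.1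

/-!
Along a curve `t ↦ (x(t), p(t))` in `L`, full rank of `d'` recovers the multiplier as
`λ(t) = -ẑ(x(t), p(t))`, which depends continuously on `t` but need not be differentiable.
Pairing `p(t) - ∇H(x(t)) = d'(x(t))ᵀ λ(t)` with `u ∈ ker d'(z₁)` removes the problem: the factor
`d'(x(t)) u` vanishes at `t = 0`, so only `λ(0) = -ẑ` survives differentiation, and
`(v₂ - M(z) v₁) ⬝ u = 0`. Conversely, write `v₂ - M(z) v₁ = d'(z₁)ᵀ μ`, take a curve `x(t)` in
`{d = 0}` with velocity `v₁` (implicit function theorem), and move the multiplier linearly: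
`(x(t), ∇H(x(t)) + d'(x(t))ᵀ (λ₀ + t μ))` is a curve in `L` with velocity `v`.
-/

open Filter Topology

section Analysis

theorem ContDiffAt.eventually_differentiableAt {𝕜 E F : Type*} [NontriviallyNormedField 𝕜]
    [NormedAddCommGroup E] [NormedSpace 𝕜 E] [NormedAddCommGroup F] [NormedSpace 𝕜 F]
    {f : E → F} {x : E} {n : WithTop ℕ∞} (hf : ContDiffAt 𝕜 n f x) (hn : 1 ≤ n) :
    ∀ᶠ y in 𝓝 x, DifferentiableAt 𝕜 f y :=
  ((hf.of_le hn).eventually (by simp)).mono fun _ hy => hy.differentiableAt one_ne_zero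

theorem fderiv_apply_eq_zero_of_eventually_eq {E F : Type*} [NormedAddCommGroup E]
    [NormedSpace ℝ E] [NormedAddCommGroup F] [NormedSpace ℝ F] {f : E → F} {c : ℝ → E}
    {v : E} {t : ℝ} {y : F} (hf : DifferentiableAt ℝ f (c t)) (hc : HasDerivAt c v t)
    (hfc : ∀ᶠ s in 𝓝 t, f (c s) = y) : fderiv ℝ f (c t) v = 0 :=
  (hf.hasFDerivAt.comp_hasDerivAt t hc).unique ((hasDerivAt_const t y).congr_of_eventuallyEq hfc)

theorem HasDerivAt.smul_of_continuousAt_of_eq_zero {𝕜 F : Type*} [NontriviallyNormedField 𝕜]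
    [NormedAddCommGroup F] [NormedSpace 𝕜 F] {c : 𝕜 → 𝕜} {f : 𝕜 → F} {f' : F} {x : 𝕜}
    (hf : HasDerivAt f f' x) (hc : ContinuousAt c x) (hf0 : f x = 0) :
    HasDerivAt (fun y => c y • f y) (c x • f') x := by
  rw [hasDerivAt_iff_tendsto_slope] at hf ⊢
  have : slope (fun y => c y • f y) x = fun y => c y • slope f x y := by
    ext y
    simp [slope_def_module, hf0, smul_comm (y - x)⁻¹]
  rw [this]
  exact (hc.tendsto.mono_left nhdsWithin_le_nhds).smul hf

theorem HasDerivAt.dotProduct_const {𝕜 ι : Type*} [NontriviallyNormedField 𝕜] [Fintype ι]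
    {f : 𝕜 → ι → 𝕜} {f' : ι → 𝕜} {x : 𝕜} (hf : HasDerivAt f f' x) (u : ι → 𝕜) :
    HasDerivAt (fun y => f y ⬝ᵥ u) (f' ⬝ᵥ u) x := by
  simpa only [dotProduct] using
    HasDerivAt.fun_sum fun i _ => (hasDerivAt_pi.1 hf i).mul_const (u i)

theorem exists_curve_of_fderiv_surjective {E F : Type*} [NormedAddCommGroup E] [NormedSpace ℝ E]
    [CompleteSpace E] [NormedAddCommGroup F] [NormedSpace ℝ F] [FiniteDimensional ℝ F]
    {f : E → F} {a v : E} (hf : ContDiffAt ℝ 1 f a)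
    (hsurj : (fderiv ℝ f a : E →ₗ[ℝ] F).range = ⊤) (hv : fderiv ℝ f a v = 0) :
    ∃ c : ℝ → E, ContDiffAt ℝ 1 c 0 ∧ HasDerivAt c v 0 ∧ c 0 = a ∧
      ∀ᶠ t in 𝓝 0, f (c t) = f a := by
  have hs := hf.hasStrictFDerivAt one_ne_zero
  have := FiniteDimensional.complete ℝ F
  set ψ := Function.uncurry (hs.implicitFunction f _ hsurj)
  set w : (fderiv ℝ f a : E →ₗ[ℝ] F).ker := ⟨v, hv⟩
  set line : ℝ → F × _ := fun t => (f a, t • w)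
  have hline : ContDiffAt ℝ 1 line 0 := by fun_prop
  have hline0 : line 0 = (f a, 0) := by simp [line]
  -- `ψ` unfolds to the implicit function of `φ`, so the general smoothness theorem applies
  have hψ : ContDiffAt ℝ 1 ψ (line 0) := by
    set φ := hs.implicitFunctionDataOfComplemented f _ hsurj
      (ContinuousLinearMap.ker_closedComplemented_of_finiteDimensional_range _)
    have hpt : φ.prodFun φ.pt = line 0 := by simp [φ, line, ImplicitFunctionData.prodFun]
    have h := ImplicitFunctionData.contDiffAt_implicitFunction (n := 1) (φ := φ) hf
      (by simp only [φ, HasStrictFDerivAt.implicitFunctionDataOfComplemented]; fun_prop)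
      one_ne_zero
    rwa [hpt] at h
  refine ⟨ψ ∘ line, hψ.comp 0 hline, ?_, ?_, ?_⟩
  · have h := (hs.to_implicitFunction hsurj).hasFDerivAt.comp_hasDerivAt_of_eq (0 : ℝ)
      ((hasDerivAt_id (0 : ℝ)).smul_const w) (by simp)
    rw [one_smul] at h
    exact h
  · simp only [Function.comp_apply, hline0]
    exact hs.implicitFunction_apply_image hsurj
  · exact hline.continuousAt.eventually (hline0 ▸ hs.map_implicitFunction_eq hsurj)

theorem mem_tangentSet_iff {V : Type*} [NormedAddCommGroup V] [NormedSpace ℝ V]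
    {S : Set V} {z v : V} :
    v ∈ TangentSet S z ↔ ∃ γ : ℝ → V, ContDiffAt ℝ 1 γ 0 ∧ HasDerivAt γ v 0 ∧
      (∀ᶠ t in 𝓝 0, γ t ∈ S) ∧ γ 0 = z := by
  have hI : Set.Ioo (-1 : ℝ) 1 ∈ 𝓝 0 := Ioo_mem_nhds (by norm_num) (by norm_num)
  constructor
  · rintro ⟨γ, hγ, hS, h0, hv⟩
    have hγ0 := hγ.contDiffAt hI
    refine ⟨γ, hγ0, ?_, eventually_of_mem hI hS, h0⟩
    rw [← hv, derivWithin_of_mem_nhds hI]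
    exact (hγ0.differentiableAt one_ne_zero).hasDerivAt
  · rintro ⟨γ, hγ, hv, hS, h0⟩
    obtain ⟨ε, hε, hball⟩ := Metric.eventually_nhds_iff.1 ((hγ.eventually (by simp)).and hS)
    -- a reparametrization of `ℝ` into `(-ε, ε)` with unit speed at `0`
    set φ : ℝ → ℝ := fun t => ε / 2 * Real.sin (2 / ε * t)
    have hφ : ∀ t, dist (φ t) 0 < ε := fun t => by
      have := Real.abs_sin_le_one (2 / ε * t)
      rw [Real.dist_eq, sub_zero, abs_mul, abs_of_pos (half_pos hε)]
      nlinarith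
    have hφ0 : φ 0 = 0 := by simp [φ]
    have hφ' : HasDerivAt φ 1 0 := by
      refine (((Real.hasDerivAt_sin _).comp 0 ((hasDerivAt_id (0 : ℝ)).const_mul (2 / ε))).const_mul
        (ε / 2)).congr_deriv ?_
      field_simp
      simp
    refine ⟨γ ∘ φ, fun t _ => ?_, fun t _ => (hball (hφ t)).2, by simp [hφ0, h0], ?_⟩
    · exact ((hball (hφ t)).1.comp t (by fun_prop)).contDiffWithinAt
    · rw [derivWithin_of_mem_nhds hI]
      have h := ((hφ0 ▸ hv).scomp 0 hφ').deriv
      rwa [one_smul] at h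

end Analysis

section LinearAlgebra

variable {m n : Type*} [Fintype m] [Fintype n] [DecidableEq m] {A : Matrix m n ℝ}

theorem isUnit_mul_transpose_of_rank_eq (h : A.rank = Fintype.card m) : IsUnit (A * Aᵀ) := by
  rw [← mulVec_surjective_iff_isUnit, ← Matrix.coe_mulVecLin, ← LinearMap.range_eq_top]
  apply Submodule.eq_top_of_finrank_eq
  rw [← Matrix.rank, rank_self_mul_transpose, h, Module.finrank_fintype_fun_eq_card]

theorem exists_eq_transpose_mulVec_of_orthogonal_ker (hA : IsUnit (A * Aᵀ)) {w : n → ℝ}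
    (hw : ∀ u, A *ᵥ u = 0 → w ⬝ᵥ u = 0) : ∃ μ, w = Aᵀ *ᵥ μ := by
  set μ := (A * Aᵀ)⁻¹ *ᵥ (A *ᵥ w)
  set u := w - Aᵀ *ᵥ μ
  have hu : A *ᵥ u = 0 := by
    rw [mulVec_sub, mulVec_mulVec, mulVec_mulVec,
      mul_nonsing_inv _ ((isUnit_iff_isUnit_det _).1 hA), one_mulVec, sub_self]
  have huu : u ⬝ᵥ u = 0 := by
    rw [sub_dotProduct, hw u hu, dotProduct_comm, dotProduct_mulVec, vecMul_transpose, hu,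
      zero_dotProduct, sub_zero]
  exact ⟨μ, sub_eq_zero.1 (dotProduct_self_eq_zero.1 huu)⟩

end LinearAlgebra

section Coordinates

variable {n k : ℕ} {H : (Fin n → ℝ) → ℝ} {d : (Fin n → ℝ) → (Fin k → ℝ)} {x : Fin n → ℝ}

theorem jac_mulVec (d : (Fin n → ℝ) → (Fin k → ℝ)) (x w : Fin n → ℝ) :
    jac d x *ᵥ w = fderiv ℝ d x w :=
  LinearMap.toMatrix'_mulVec (fderiv ℝ d x : (Fin n → ℝ) →ₗ[ℝ] (Fin k → ℝ)) w

theorem range_fderiv_eq_top_of_rank_jac (h : (jac d x).rank = k) :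
    (fderiv ℝ d x : (Fin n → ℝ) →ₗ[ℝ] (Fin k → ℝ)).range = ⊤ := by
  have hJ : (jac d x).mulVecLin = fderiv ℝ d x := LinearMap.ext (jac_mulVec d x)
  rw [← hJ]
  exact Submodule.eq_top_of_finrank_eq (by rw [← Matrix.rank, h, Module.finrank_fin_fun])

theorem jac_row_eq_grad (hd : DifferentiableAt ℝ d x) (l : Fin k) :
    jac d x l = grad (fun y => d y l) x := by
  ext i
  simp [jac, grad, fderiv_apply hd l]

theorem transpose_jac_mulVec (hd : DifferentiableAt ℝ d x) (μ : Fin k → ℝ) :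
    (jac d x)ᵀ *ᵥ μ = ∑ l, μ l • grad (fun y => d y l) x := by
  simp_rw [mulVec_transpose, vecMul_eq_sum, jac_row_eq_grad hd]

theorem continuousAt_jac (hd : ContDiffAt ℝ 1 d x) : ContinuousAt (jac d) x := by
  have h := (hd.fderiv_right (m := 0) le_rfl).continuousAt
  exact continuousAt_pi.2 fun l => continuousAt_pi.2 fun i =>
    (continuous_apply l).continuousAt.comp (h.clm_apply continuousAt_const)

theorem ContDiffAt.grad {m p : WithTop ℕ∞} (hH : ContDiffAt ℝ p H x) (hm : m + 1 ≤ p) :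
    ContDiffAt ℝ m (grad H) x :=
  contDiffAt_pi.2 fun _ => (hH.fderiv_right hm).clm_apply contDiffAt_const

theorem jac_grad (hH : DifferentiableAt ℝ (grad H) x) : jac (grad H) x = (hess H x)ᵀ := by
  ext l j
  have h : fderiv ℝ (fun y => grad H y l) x = _ := fderiv_apply hH l
  simp only [grad] at h
  simp [jac, hess, h]

theorem isSymm_hess (hH : ContDiffAt ℝ 2 H x) : (hess H x).IsSymm := by
  have hD : DifferentiableAt ℝ (fderiv ℝ H) x :=
    (hH.fderiv_right (m := 1) le_rfl).differentiableAt one_ne_zero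
  ext i j
  simp only [transpose_apply, hess, of_apply, fderiv_clm_apply hD (differentiableAt_const _)]
  simpa using hH.isSymmSndFDerivAt (by simp) _ _

theorem HasDerivAt.grad_comp {c : ℝ → Fin n → ℝ} {v : Fin n → ℝ} {t : ℝ}
    (hH : ContDiffAt ℝ 2 H (c t)) (hc : HasDerivAt c v t) :
    HasDerivAt (fun s => grad H (c s)) (hess H (c t) *ᵥ v) t := by
  have hg : DifferentiableAt ℝ (grad H) (c t) :=
    (hH.grad (m := 1) le_rfl).differentiableAt one_ne_zero
  have h := hg.hasFDerivAt.comp_hasDerivAt t hc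
  rwa [← jac_mulVec, jac_grad hg, (isSymm_hess hH).eq] at h

theorem hasDerivAt_grad_add_sum_smul_grad {c : ℝ → Fin n → ℝ} {Λ : ℝ → Fin k → ℝ}
    {v : Fin n → ℝ} {Λ' : Fin k → ℝ} (hH : ContDiffAt ℝ 2 H (c 0))
    (hd : ContDiffAt ℝ 2 d (c 0)) (hc : HasDerivAt c v 0) (hΛ : HasDerivAt Λ Λ' 0) :
    HasDerivAt (fun t => grad H (c t) + ∑ l, Λ t l • grad (fun y => d y l) (c t))
      ((hess H (c 0) + ∑ l, Λ 0 l • hess (fun y => d y l) (c 0)) *ᵥ v +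
        (jac d (c 0))ᵀ *ᵥ Λ') 0 := by
  refine ((HasDerivAt.grad_comp hH hc).add (HasDerivAt.fun_sum fun l _ =>
    (hasDerivAt_pi.1 hΛ l).smul (HasDerivAt.grad_comp (contDiffAt_pi.1 hd l) hc))).congr_deriv ?_
  rw [transpose_jac_mulVec (hd.differentiableAt two_ne_zero), add_mulVec, sum_mulVec,
    Finset.sum_add_distrib]
  simp only [smul_mulVec]
  abel

end Coordinates

section Lagrangian

variable {n k : ℕ} {U : Set (Fin n → ℝ)} {H : (Fin n → ℝ) → ℝ} {d : (Fin n → ℝ) → (Fin k → ℝ)}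

def constrainedLagrangian (U : Set (Fin n → ℝ)) (H : (Fin n → ℝ) → ℝ)
    (d : (Fin n → ℝ) → (Fin k → ℝ)) : Set ((Fin n → ℝ) × (Fin n → ℝ)) :=
  {p | ∃ (x : Fin n → ℝ) (lam : Fin k → ℝ),
    x ∈ U ∧ d x = 0 ∧ p = (x, grad H x + (jac d x)ᵀ *ᵥ lam)}

def constrainedLagrangianTangent (H : (Fin n → ℝ) → ℝ) (d : (Fin n → ℝ) → (Fin k → ℝ))
    (z : (Fin n → ℝ) × (Fin n → ℝ)) : Set ((Fin n → ℝ) × (Fin n → ℝ)) :=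
  {v | jac d z.1 *ᵥ v.1 = 0 ∧
    ∀ u : Fin n → ℝ, jac d z.1 *ᵥ u = 0 → (v.2 - Mmat H d z *ᵥ v.1) ⬝ᵥ u = 0}

theorem zhat_eq_neg {x : Fin n → ℝ} (hA : IsUnit (jac d x * (jac d x)ᵀ)) (lam : Fin k → ℝ) :
    zhat H d (x, grad H x + (jac d x)ᵀ *ᵥ lam) = -lam := by
  rw [zhat]
  dsimp only
  rw [sub_add_cancel_left, mulVec_neg, mulVec_neg, mulVec_mulVec, mulVec_mulVec,
    Matrix.mul_assoc, nonsing_inv_mul _ ((isUnit_iff_isUnit_det _).1 hA), one_mulVec]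

theorem Mmat_eq {x : Fin n → ℝ} (hA : IsUnit (jac d x * (jac d x)ᵀ)) (lam : Fin k → ℝ) :
    Mmat H d (x, grad H x + (jac d x)ᵀ *ᵥ lam) =
      hess H x + ∑ l, lam l • hess (fun y => d y l) x := by
  simp [Mmat, zhat_eq_neg hA, sub_eq_add_neg]

theorem Mmat_mulVec (z : (Fin n → ℝ) × (Fin n → ℝ)) (w : Fin n → ℝ) :
    Mmat H d z *ᵥ w = hess H z.1 *ᵥ w - ∑ l, zhat H d z l • (hess (fun y => d y l) z.1 *ᵥ w) := by
  simp [Mmat, sub_mulVec, sum_mulVec, smul_mulVec]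

theorem continuousAt_zhat {z : (Fin n → ℝ) × (Fin n → ℝ)} (hH : ContDiffAt ℝ 1 H z.1)
    (hd : ContDiffAt ℝ 1 d z.1) (hA : IsUnit (jac d z.1 * (jac d z.1)ᵀ)) :
    ContinuousAt (zhat H d) z := by
  have hJ : ContinuousAt (fun p : (Fin n → ℝ) × (Fin n → ℝ) => jac d p.1) z :=
    (continuousAt_jac hd).comp continuousAt_fst
  have hg : ContinuousAt (fun p : (Fin n → ℝ) × (Fin n → ℝ) => grad H p.1 - p.2) z :=
    ((hH.grad (m := 0) le_rfl).continuousAt.comp continuousAt_fst).sub continuousAt_snd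
  have hinv : ContinuousAt (fun p : (Fin n → ℝ) × (Fin n → ℝ) =>
      (jac d p.1 * (jac d p.1)ᵀ)⁻¹) z := by
    refine (continuousAt_matrix_inv _ ?_).comp
      ((continuous_id.matrix_mul continuous_id.matrix_transpose).continuousAt.comp hJ)
    rw [Ring.inverse_eq_inv']
    exact continuousAt_inv₀ ((isUnit_iff_isUnit_det _).1 hA).ne_zero
  have hmul : ∀ m, Continuous fun q : Matrix (Fin k) (Fin m) ℝ × (Fin m → ℝ) => q.1 *ᵥ q.2 :=
    fun _ => continuous_fst.matrix_mulVec continuous_snd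
  exact (hmul k).continuousAt.comp (hinv.prodMk ((hmul n).continuousAt.comp (hJ.prodMk hg)))

theorem mem_constrainedLagrangian_iff (hrank : ∀ x ∈ U, (jac d x).rank = k)
    {p : (Fin n → ℝ) × (Fin n → ℝ)} :
    p ∈ constrainedLagrangian U H d ↔
      p.1 ∈ U ∧ d p.1 = 0 ∧ p.2 = grad H p.1 - (jac d p.1)ᵀ *ᵥ zhat H d p := by
  constructor
  · rintro ⟨x, lam, hx, hx0, rfl⟩
    have hA := isUnit_mul_transpose_of_rank_eq ((hrank x hx).trans (Fintype.card_fin k).symm)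
    exact ⟨hx, hx0, by rw [zhat_eq_neg hA, mulVec_neg, sub_neg_eq_add]⟩
  · rintro ⟨hx, hx0, h2⟩
    exact ⟨p.1, -zhat H d p, hx, hx0, Prod.ext rfl (by rw [h2, mulVec_neg, sub_eq_add_neg])⟩

theorem dotProduct_sub_Mmat_mulVec_eq_zero (hrank : ∀ x ∈ U, (jac d x).rank = k)
    {γ : ℝ → (Fin n → ℝ) × (Fin n → ℝ)} {v : (Fin n → ℝ) × (Fin n → ℝ)} (hγ : HasDerivAt γ v 0)
    (hγL : ∀ᶠ t in 𝓝 0, γ t ∈ constrainedLagrangian U H d)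
    (hH : ContDiffAt ℝ 2 H (γ 0).1) (hd : ContDiffAt ℝ 2 d (γ 0).1) {u : Fin n → ℝ}
    (hu : jac d (γ 0).1 *ᵥ u = 0) : (v.2 - Mmat H d (γ 0) *ᵥ v.1) ⬝ᵥ u = 0 := by
  set c : ℝ → Fin n → ℝ := fun t => (γ t).1
  have hc : HasDerivAt c v.1 0 :=
    (ContinuousLinearMap.fst ℝ (Fin n → ℝ) (Fin n → ℝ)).hasFDerivAt.comp_hasDerivAt 0 hγ
  have hA : IsUnit (jac d (c 0) * (jac d (c 0))ᵀ) := isUnit_mul_transpose_of_rank_eq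
    (by simpa using hrank _ ((mem_constrainedLagrangian_iff hrank).1 hγL.self_of_nhds).1)
  have hζ : ContinuousAt (fun t => zhat H d (γ t)) 0 :=
    (continuousAt_zhat (hH.of_le one_le_two) (hd.of_le one_le_two) hA).comp hγ.continuousAt
  have hdl : ∀ l, grad (fun y => d y l) (c 0) ⬝ᵥ u = 0 := fun l => by
    rw [← jac_row_eq_grad (hd.differentiableAt two_ne_zero)]
    exact congrFun hu l
  have hlhs : HasDerivAt (fun t => ((γ t).2 - grad H (c t)) ⬝ᵥ u)
      ((v.2 - hess H (c 0) *ᵥ v.1) ⬝ᵥ u) 0 :=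
    (((ContinuousLinearMap.snd ℝ (Fin n → ℝ) (Fin n → ℝ)).hasFDerivAt.comp_hasDerivAt 0 hγ).sub
      (HasDerivAt.grad_comp hH hc)).dotProduct_const u
  have hrhs : HasDerivAt (fun t => -∑ l, zhat H d (γ t) l • (grad (fun y => d y l) (c t) ⬝ᵥ u))
      (-∑ l, zhat H d (γ 0) l • ((hess (fun y => d y l) (c 0) *ᵥ v.1) ⬝ᵥ u)) 0 :=
    (HasDerivAt.fun_sum fun l _ =>
      ((HasDerivAt.grad_comp (contDiffAt_pi.1 hd l) hc).dotProduct_const u)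
        |>.smul_of_continuousAt_of_eq_zero ((continuous_apply l).continuousAt.comp hζ) (hdl l)).neg
  have heq : (fun t => ((γ t).2 - grad H (c t)) ⬝ᵥ u) =ᶠ[𝓝 0]
      fun t => -∑ l, zhat H d (γ t) l • (grad (fun y => d y l) (c t) ⬝ᵥ u) := by
    filter_upwards [hγL, hc.continuousAt.eventually (hd.eventually_differentiableAt one_le_two)]
      with t ht hdt
    rw [((mem_constrainedLagrangian_iff hrank).1 ht).2.2, sub_sub_cancel_left, neg_dotProduct,
      transpose_jac_mulVec hdt, sum_dotProduct]
    simp only [smul_dotProduct]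
  rw [Mmat_mulVec, ← sub_add, add_dotProduct, hlhs.unique (hrhs.congr_of_eventuallyEq heq),
    sum_dotProduct]
  simp only [smul_dotProduct]
  exact neg_add_cancel _

theorem tangentSet_subset_constrainedLagrangianTangent (hrank : ∀ x ∈ U, (jac d x).rank = k)
    {z : (Fin n → ℝ) × (Fin n → ℝ)} (hH : ContDiffAt ℝ 2 H z.1) (hd : ContDiffAt ℝ 2 d z.1) :
    TangentSet (constrainedLagrangian U H d) z ⊆ constrainedLagrangianTangent H d z := by
  intro v hv
  obtain ⟨γ, -, hγ, hγL, rfl⟩ := mem_tangentSet_iff.1 hv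
  refine ⟨?_, fun u hu => dotProduct_sub_Mmat_mulVec_eq_zero hrank hγ hγL hH hd hu⟩
  rw [jac_mulVec]
  exact fderiv_apply_eq_zero_of_eventually_eq (hd.differentiableAt two_ne_zero)
    ((ContinuousLinearMap.fst ℝ (Fin n → ℝ) (Fin n → ℝ)).hasFDerivAt.comp_hasDerivAt 0 hγ)
    (hγL.mono fun t ht => ((mem_constrainedLagrangian_iff hrank).1 ht).2.1)

theorem constrainedLagrangianTangent_subset_tangentSet (hU : IsOpen U)
    {z : (Fin n → ℝ) × (Fin n → ℝ)} (hz : z ∈ constrainedLagrangian U H d)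
    (hH : ContDiffAt ℝ 2 H z.1) (hd : ContDiffAt ℝ 2 d z.1) (hrank : (jac d z.1).rank = k) :
    constrainedLagrangianTangent H d z ⊆ TangentSet (constrainedLagrangian U H d) z := by
  rintro v ⟨hv₁, hv₂⟩
  obtain ⟨x, lam, hx, hx0, rfl⟩ := hz
  dsimp only at hH hd hrank hv₁ hv₂
  have hA : IsUnit (jac d x * (jac d x)ᵀ) := isUnit_mul_transpose_of_rank_eq (by simpa using hrank)
  obtain ⟨μ, hμ⟩ := exists_eq_transpose_mulVec_of_orthogonal_ker hA hv₂
  obtain ⟨c, hcC, hc, rfl, hcd⟩ := exists_curve_of_fderiv_surjective (hd.of_le one_le_two)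
    (range_fderiv_eq_top_of_rank_jac hrank) (by rwa [← jac_mulVec])
  set Λ : ℝ → Fin k → ℝ := fun t => lam + t • μ
  have hΛ : HasDerivAt Λ μ 0 :=
    (((hasDerivAt_id (0 : ℝ)).smul_const μ).const_add lam).congr_deriv (one_smul ℝ μ)
  have hΛ0 : Λ 0 = lam := by simp [Λ]
  set g : ℝ → Fin n → ℝ := fun t => grad H (c t) + ∑ l, Λ t l • grad (fun y => d y l) (c t)
  have hgC : ContDiffAt ℝ 1 g 0 :=
    ((hH.grad le_rfl).comp 0 hcC).add (ContDiffAt.sum fun l _ => (by fun_prop :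
      ContDiffAt ℝ 1 (fun t => Λ t l) 0).smul (((contDiffAt_pi.1 hd l).grad le_rfl).comp 0 hcC))
  have hg : HasDerivAt g v.2 0 := by
    convert hasDerivAt_grad_add_sum_smul_grad hH hd hc hΛ using 1
    rw [hΛ0, ← Mmat_eq hA, ← hμ, add_sub_cancel]
  have hev : ∀ᶠ t in 𝓝 0, c t ∈ U ∧ DifferentiableAt ℝ d (c t) :=
    hc.continuousAt.eventually
      ((hU.eventually_mem hx).and (hd.eventually_differentiableAt one_le_two))
  refine mem_tangentSet_iff.2 ⟨fun t => (c t, g t), hcC.prodMk hgC, hc.prodMk hg, ?_, ?_⟩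
  · filter_upwards [hev, hcd] with t ⟨htU, htd⟩ ht0
    exact ⟨c t, Λ t, htU, ht0.trans hx0, by rw [transpose_jac_mulVec htd]⟩
  · simp [g, hΛ0, transpose_jac_mulVec (hd.differentiableAt two_ne_zero)]

end Lagrangian

theorem tangent_space_of_constrained_lagrangian_general {n k : ℕ}
    (U : Set (Fin n → ℝ)) (hU : IsOpen U)
    (H : (Fin n → ℝ) → ℝ) (d : (Fin n → ℝ) → (Fin k → ℝ))
    (hH : ContDiffOn ℝ 2 H U) (hd : ContDiffOn ℝ 2 d U)
    (hrank : ∀ x ∈ U, (jac d x).rank = k)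
    (L : Set ((Fin n → ℝ) × (Fin n → ℝ)))
    (hL : L = {p | ∃ (x : Fin n → ℝ) (lam : Fin k → ℝ),
      x ∈ U ∧ d x = 0 ∧ p = (x, grad H x + (jac d x)ᵀ *ᵥ lam)}) :
    ∀ z ∈ L,
      TangentSet L z =
        {v : (Fin n → ℝ) × (Fin n → ℝ) |
          jac d z.1 *ᵥ v.1 = 0 ∧
          ∀ u : Fin n → ℝ, jac d z.1 *ᵥ u = 0 →
            (v.2 - Mmat H d z *ᵥ v.1) ⬝ᵥ u = 0} := by
  subst hL
  intro z hz
  have hz₁ : z.1 ∈ U := ((mem_constrainedLagrangian_iff hrank).1 hz).1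
  have hHz := hH.contDiffAt (hU.mem_nhds hz₁)
  have hdz := hd.contDiffAt (hU.mem_nhds hz₁)
  exact (tangentSet_subset_constrainedLagrangianTangent hrank hHz hdz).antisymm
    (constrainedLagrangianTangent_subset_tangentSet hU hz hHz hdz (hrank _ hz₁))

/-- For the constrained Lagrangian submanifold
`L = {(x, ∇H(x) + d'(x)ᵀλ) : x ∈ U, d(x) = 0, λ ∈ ℝ^k}`, the tangent space at `z ∈ L` is
`{(v₁,v₂) : d'(z₁)v₁ = 0, v₂ − M(z)v₁ ∈ (ker d'(z₁))^⊥}`. -/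
theorem tangent_space_of_constrained_lagrangian {n k : ℕ}
    (U : Set (Fin n → ℝ)) (hU : IsOpen U)
    (H : (Fin n → ℝ) → ℝ) (d : (Fin n → ℝ) → (Fin k → ℝ))
    (hH : ContDiffOn ℝ 2 H U) (hd : ContDiffOn ℝ 2 d U)
    (hrank : ∀ x ∈ U, (jac d x).rank = k)
    (hne : ∃ x ∈ U, d x = 0)
    (L : Set ((Fin n → ℝ) × (Fin n → ℝ)))
    (hL : L = {p | ∃ (x : Fin n → ℝ) (lam : Fin k → ℝ),
      x ∈ U ∧ d x = 0 ∧ p = (x, grad H x + (jac d x)ᵀ *ᵥ lam)}) :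
    ∀ z ∈ L,
      TangentSet L z =
        {v : (Fin n → ℝ) × (Fin n → ℝ) |
          jac d z.1 *ᵥ v.1 = 0 ∧
          ∀ u : Fin n → ℝ, jac d z.1 *ᵥ u = 0 →
            (v.2 - Mmat H d z *ᵥ v.1) ⬝ᵥ u = 0} :=
  tangent_space_of_constrained_lagrangian_general U hU H d hH hd hrank L hL
end
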